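/- arXiv:1509.03674 — 5 statements merged into one kernel-verified Lean document; each statement's English description precedes it below -/
import Mathlib

section
/- (Main Theorem, part (f); intertwined operators transfer.) Let w and w̃ be weight matrices, let p(x,n) be the sequence of monic orthogonal matrix polynomials for w, and let ν be a matrix differential operator such that p̃(x,n) := p(x,n)·ν is a sequence of orthogonal matrix polynomials for w̃. If η ∈ D(w), with eigenvalues Λ′_n ∈ M_N(ℂ) satisfying p(x,n)·η = Λ′_n p(x,n), and η̃ is a matrix differential operator with polynomial coefficients satisfying ην = νη̃ (i.e., (p·η)·ν = (p·ν)·η̃ for all matrix polynomials p), then η̃ ∈ D(w̃); indeed p̃(x,n)·η̃ = Λ′_n p̃(x,n) for every n. -/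
open MeasureTheory Polynomial Matrix Set Filter Topology
open scoped ComplexOrder

/-- `N×N` complex matrices. -/
abbrev Mat (N : ℕ) := Matrix (Fin N) (Fin N) ℂ

/-- `N×N` matrices of complex polynomials (matrix polynomials). -/
abbrev MatPoly (N : ℕ) := Matrix (Fin N) (Fin N) (Polynomial ℂ)

/-- Evaluation of a matrix polynomial at a real point. -/
noncomputable def evalM {N : ℕ} (p : MatPoly N) (x : ℝ) : Mat N :=
  p.map fun q => q.eval (x : ℂ)

/-- Entrywise (formal) derivative of a matrix polynomial. -/
noncomputable def matD {N : ℕ} (p : MatPoly N) : MatPoly N :=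
  p.map fun q => Polynomial.derivative q

/-- Left multiplication of a matrix polynomial by a constant matrix. -/
noncomputable def csmul {N : ℕ} (Λ : Mat N) (p : MatPoly N) : MatPoly N :=
  Λ.map (Polynomial.C) * p

/-- Degree of a matrix polynomial (the sup of the degrees of its entries, `⊥` for `0`). -/
noncomputable def mdeg {N : ℕ} (p : MatPoly N) : WithBot ℕ :=
  Finset.univ.sup fun ij : Fin N × Fin N => (p ij.1 ij.2).degree

/-- The matrix of `n`-th coefficients of a matrix polynomial. -/
def coeffMat {N : ℕ} (p : MatPoly N) (n : ℕ) : Mat N :=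
  Matrix.of fun i j => (p i j).coeff n

/-- The scalar matrix polynomial `q·I`. -/
noncomputable def scalarM (N : ℕ) (q : Polynomial ℂ) : MatPoly N :=
  Matrix.diagonal fun _ => q

/-- Right action of the matrix differential operator `∑ ∂^i a i` (orders `0,…,ℓ`)
on a matrix polynomial: `p ↦ ∑ p⁽ⁱ⁾ * a i`. -/
noncomputable def act {N : ℕ} (a : ℕ → MatPoly N) (ℓ : ℕ) (p : MatPoly N) : MatPoly N :=
  ∑ i ∈ Finset.range (ℓ + 1), (matD)^[i] p * a i

/-- Entrywise derivative of a matrix-valued function on `ℝ`. -/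
noncomputable def mderiv {N : ℕ} (f : ℝ → Mat N) : ℝ → Mat N :=
  fun x => Matrix.of fun i j => deriv (fun t => f t i j) x

/-- The matrix-valued pairing `⟨f,g⟩_w = ∫ f(x) w(x) g(x)ᴴ dx` of matrix-valued functions. -/
noncomputable def fip {N : ℕ} (w : ℝ → Mat N) (f g : ℝ → Mat N) : Mat N :=
  Matrix.of fun i j => ∫ x : ℝ, (f x * w x * (g x)ᴴ) i j

/-- The matrix-valued inner product `⟨p,q⟩_w` of matrix polynomials. -/
noncomputable def mip {N : ℕ} (w : ℝ → Mat N) (p q : MatPoly N) : Mat N :=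
  fip w (evalM p) (evalM q)

/-- A weight matrix supported on `(x₀,x₁)`: vanishes off `(x₀,x₁)`, is entrywise smooth,
Hermitian and positive definite on `(x₀,x₁)`, and has finite moments. -/
structure IsWeightMatrix {N : ℕ} (w : ℝ → Mat N) (x₀ x₁ : ℝ) : Prop where
  lt : x₀ < x₁
  vanish : ∀ x ∉ Set.Ioo x₀ x₁, w x = 0
  smooth : ∀ i j, ContDiffOn ℝ (⊤ : ℕ∞) (fun x => w x i j) (Set.Ioo x₀ x₁)
  herm : ∀ x ∈ Set.Ioo x₀ x₁, (w x).IsHermitian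
  posdef : ∀ x ∈ Set.Ioo x₀ x₁, (w x).PosDef
  moments : ∀ m : ℕ, Integrable fun x : ℝ => |x| ^ m * ((w x).trace.re)

/-- A sequence of orthogonal matrix polynomials for `w`: `P n` has degree `n` with
nonsingular (invertible) leading coefficient, and distinct terms are `w`-orthogonal. -/
structure IsOMPseq {N : ℕ} (w : ℝ → Mat N) (P : ℕ → MatPoly N) : Prop where
  degle : ∀ n, ∀ i j, (P n i j).natDegree ≤ n
  lead : ∀ n, IsUnit (coeffMat (P n) n)
  orth : ∀ m n, m ≠ n → mip w (P m) (P n) = 0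

/-- The sequence of *monic* orthogonal matrix polynomials for `w`. -/
structure IsMonicOMP {N : ℕ} (w : ℝ → Mat N) (P : ℕ → MatPoly N) : Prop where
  degle : ∀ n, ∀ i j, (P n i j).natDegree ≤ n
  monic : ∀ n, coeffMat (P n) n = 1
  orth : ∀ m n, m ≠ n → mip w (P m) (P n) = 0

/-! ### Algebraic lemmas -/

lemma csmul_apply {N : ℕ} (Λ : Mat N) (p : MatPoly N) (i j : Fin N) :
    csmul Λ p i j = ∑ k, Polynomial.C (Λ i k) * p k j := by
  simp [csmul, Matrix.mul_apply]

lemma matD_csmul {N : ℕ} (Λ : Mat N) (p : MatPoly N) :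
    matD (csmul Λ p) = csmul Λ (matD p) := by
  ext i j
  simp [matD, csmul_apply, derivative_sum]

lemma matD_iter_csmul {N : ℕ} (n : ℕ) (Λ : Mat N) (p : MatPoly N) :
    (matD)^[n] (csmul Λ p) = csmul Λ ((matD)^[n] p) := by
  induction n with
  | zero => rfl
  | succ n ih => simp [Function.iterate_succ_apply', ih, matD_csmul]

lemma csmul_mul {N : ℕ} (Λ : Mat N) (p a : MatPoly N) :
    csmul Λ p * a = csmul Λ (p * a) := by
  simp [csmul, mul_assoc]

lemma act_csmul {N : ℕ} (a : ℕ → MatPoly N) (ℓ : ℕ) (Λ : Mat N) (p : MatPoly N) :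
    act a ℓ (csmul Λ p) = csmul Λ (act a ℓ p) := by
  simp only [act, matD_iter_csmul, csmul_mul]
  simp [csmul, Finset.mul_sum]

lemma csmul_csmul {N : ℕ} (A B : Mat N) (p : MatPoly N) :
    csmul A (csmul B p) = csmul (A * B) p := by
  unfold csmul
  rw [← mul_assoc]
  congr 1
  exact (Matrix.map_mul (f := (Polynomial.C : ℂ →+* Polynomial ℂ))).symm

lemma coeffMat_csmul {N : ℕ} (A : Mat N) (p : MatPoly N) (m : ℕ) :
    coeffMat (csmul A p) m = A * coeffMat p m := by
  ext i j
  simp [coeffMat, csmul_apply, Matrix.mul_apply, Polynomial.finset_sum_coeff, coeff_C_mul]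

lemma coeffMat_sub {N : ℕ} (p q : MatPoly N) (m : ℕ) :
    coeffMat (p - q) m = coeffMat p m - coeffMat q m := by
  ext i j; simp [coeffMat]

lemma coeffMat_sum {N : ℕ} {α : Type*} (s : Finset α) (f : α → MatPoly N) (m : ℕ) :
    coeffMat (∑ k ∈ s, f k) m = ∑ k ∈ s, coeffMat (f k) m := by
  ext i j; simp [coeffMat, Polynomial.finset_sum_coeff, Matrix.sum_apply]

lemma evalM_csmul {N : ℕ} (A : Mat N) (p : MatPoly N) (x : ℝ) :
    evalM (csmul A p) x = A * evalM p x := by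
  ext i j
  simp [evalM, csmul_apply, Matrix.mul_apply, Polynomial.eval_finset_sum]

lemma evalM_sum {N : ℕ} {α : Type*} (s : Finset α) (f : α → MatPoly N) (x : ℝ) :
    evalM (∑ k ∈ s, f k) x = ∑ k ∈ s, evalM (f k) x := by
  ext i j
  simp [evalM, Polynomial.eval_finset_sum, Matrix.sum_apply]

lemma csmul_zero_left {N : ℕ} (p : MatPoly N) : csmul (0 : Mat N) p = 0 := by
  simp [csmul, Matrix.map_zero]

/-! ### Basis expansion -/

lemma matpoly_ext {N : ℕ} {p q : MatPoly N} (h : ∀ m, coeffMat p m = coeffMat q m) : p = q := by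
  ext i j k
  have := congrFun (congrFun (h k) i) j
  simpa [coeffMat] using this

lemma coeffMat_zero_of_deg {N : ℕ} {p : MatPoly N} {n m : ℕ}
    (h : ∀ i j, (p i j).natDegree ≤ n) (hm : n < m) : coeffMat p m = 0 := by
  ext i j
  exact Polynomial.coeff_eq_zero_of_natDegree_lt (lt_of_le_of_lt (h i j) hm)

lemma expand {N : ℕ} (R : ℕ → MatPoly N) (hdeg : ∀ n, ∀ i j, (R n i j).natDegree ≤ n)
    (hlead : ∀ n, IsUnit (coeffMat (R n) n)) :
    ∀ n (q : MatPoly N), (∀ m, n < m → coeffMat q m = 0) →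
      ∃ A : ℕ → Mat N, q = ∑ k ∈ Finset.range (n + 1), csmul (A k) (R k) := by
  intro n
  induction n with
  | zero =>
    intro q hq
    refine ⟨fun _ => coeffMat q 0 * (coeffMat (R 0) 0)⁻¹, matpoly_ext fun m => ?_⟩
    have hinv : (coeffMat (R 0) 0)⁻¹ * coeffMat (R 0) 0 = 1 :=
      Matrix.nonsing_inv_mul _ ((Matrix.isUnit_iff_isUnit_det _).mp (hlead 0))
    rcases Nat.eq_zero_or_pos m with rfl | hm
    · simp [coeffMat_sum, coeffMat_csmul, mul_assoc, hinv]
    · rw [hq m hm]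
      simp [coeffMat_sum, coeffMat_csmul, coeffMat_zero_of_deg (hdeg 0) hm]
  | succ n ih =>
    intro q hq
    set A : Mat N := coeffMat q (n + 1) * (coeffMat (R (n + 1)) (n + 1))⁻¹ with hA
    have hinv : (coeffMat (R (n + 1)) (n + 1))⁻¹ * coeffMat (R (n + 1)) (n + 1) = 1 :=
      Matrix.nonsing_inv_mul _ ((Matrix.isUnit_iff_isUnit_det _).mp (hlead (n + 1)))
    have hq' : ∀ m, n < m → coeffMat (q - csmul A (R (n + 1))) m = 0 := by
      intro m hm
      rw [coeffMat_sub, coeffMat_csmul]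
      rcases eq_or_lt_of_le (Nat.succ_le_of_lt hm) with hmn | hmn
      · rw [← hmn, hA, mul_assoc, hinv, mul_one, sub_self]
      · rw [hq m hmn, coeffMat_zero_of_deg (hdeg (n + 1)) hmn, mul_zero, sub_self]
    obtain ⟨B, hB⟩ := ih (q - csmul A (R (n + 1))) hq'
    refine ⟨fun k => if k = n + 1 then A else B k, ?_⟩
    rw [Finset.sum_range_succ]
    have : ∀ k ∈ Finset.range (n + 1),
        csmul (if k = n + 1 then A else B k) (R k) = csmul (B k) (R k) := by
      intro k hk
      have hk' : k ≠ n + 1 := by have := Finset.mem_range.mp hk; omega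
      rw [if_neg hk']
    rw [Finset.sum_congr rfl this, ← hB]
    simp

/-! ### Positive-semidefinite bounds -/

lemma psd_norm_le_trace {N : ℕ} {M : Mat N} (h : M.PosSemidef) (k l : Fin N) :
    ‖M k l‖ ≤ M.trace.re := by
  open scoped MatrixOrder in
  obtain ⟨B, hB⟩ := CStarAlgebra.nonneg_iff_eq_star_mul_self.mp h.nonneg
  rw [hB, Matrix.star_eq_conjTranspose]
  have htr : (Bᴴ * B).trace.re = ∑ i, ∑ r, ‖B r i‖ ^ 2 := by
    simp only [Matrix.trace, Matrix.diag_apply, Matrix.mul_apply, Matrix.conjTranspose_apply,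
      Complex.re_sum]
    refine Finset.sum_congr rfl fun i _ => Finset.sum_congr rfl fun r _ => ?_
    simp only [Complex.star_def, Complex.mul_re, Complex.conj_re, Complex.conj_im,
      Complex.sq_norm, Complex.normSq_apply]
    ring
  have hS : ∀ i : Fin N, ∑ r, ‖B r i‖ ^ 2 ≤ (Bᴴ * B).trace.re := by
    intro i
    rw [htr]
    exact Finset.single_le_sum (f := fun i => ∑ r, ‖B r i‖ ^ 2)
      (fun i _ => Finset.sum_nonneg fun r _ => sq_nonneg _) (Finset.mem_univ i)
  have hentry : ‖(Bᴴ * B) k l‖ ≤ ∑ r, ‖B r k‖ * ‖B r l‖ := by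
    rw [Matrix.mul_apply]
    refine (norm_sum_le _ _).trans (Finset.sum_le_sum fun r _ => ?_)
    rw [Matrix.conjTranspose_apply, norm_mul, norm_star]
  refine hentry.trans ?_
  have : ∑ r, ‖B r k‖ * ‖B r l‖ ≤ (∑ r, ‖B r k‖ ^ 2) / 2 + (∑ r, ‖B r l‖ ^ 2) / 2 := by
    have hsplit : (∑ r, ‖B r k‖ ^ 2) / 2 + (∑ r, ‖B r l‖ ^ 2) / 2
        = ∑ r : Fin N, (‖B r k‖ ^ 2 / 2 + ‖B r l‖ ^ 2 / 2) := by
      rw [Finset.sum_add_distrib, Finset.sum_div, Finset.sum_div]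
    rw [hsplit]
    refine Finset.sum_le_sum fun r _ => ?_
    have := two_mul_le_add_sq (‖B r k‖) (‖B r l‖)
    linarith
  refine this.trans ?_
  have h1 := hS k
  have h2 := hS l
  have h0 : 0 ≤ (Bᴴ * B).trace.re := by
    rw [htr]
    exact Finset.sum_nonneg fun i _ => Finset.sum_nonneg fun r _ => sq_nonneg _
  linarith

lemma psd_trace_nonneg {N : ℕ} {M : Mat N} (h : M.PosSemidef) : 0 ≤ M.trace.re := by
  rcases Nat.eq_zero_or_pos N with hN | hN
  · subst hN
    simp [Matrix.trace]
  · have := psd_norm_le_trace h ⟨0, hN⟩ ⟨0, hN⟩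
    exact le_trans (norm_nonneg _) this

lemma poly_norm_bound (R : Polynomial ℂ) (x : ℝ) :
    ‖R.eval (x : ℂ)‖ ≤ (∑ m ∈ Finset.range (R.natDegree + 1), ‖R.coeff m‖) *
      ∑ m ∈ Finset.range (R.natDegree + 1), |x| ^ m := by
  set C := ∑ m ∈ Finset.range (R.natDegree + 1), ‖R.coeff m‖ with hC
  rw [R.eval_eq_sum_range]
  refine (norm_sum_le _ _).trans ?_
  rw [Finset.mul_sum]
  refine Finset.sum_le_sum fun m hm => ?_
  rw [norm_mul, norm_pow, Complex.norm_real, Real.norm_eq_abs]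
  have h1 : ‖R.coeff m‖ ≤ C :=
    Finset.single_le_sum (fun i _ => norm_nonneg _) hm
  exact mul_le_mul_of_nonneg_right h1 (pow_nonneg (abs_nonneg x) m)

/-! ### Weight-matrix integrability lemmas -/

section Weight

variable {N : ℕ} {y₀ y₁ : ℝ} {wt : ℝ → Mat N}

lemma wt_psd (hwt : IsWeightMatrix wt y₀ y₁) (x : ℝ) : (wt x).PosSemidef := by
  by_cases hx : x ∈ Set.Ioo y₀ y₁
  · exact (hwt.posdef x hx).posSemidef
  · rw [hwt.vanish x hx]
    exact Matrix.PosSemidef.zero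

lemma wt_entry_aesm (hwt : IsWeightMatrix wt y₀ y₁) (k l : Fin N) :
    AEStronglyMeasurable (fun x => wt x k l) (volume : Measure ℝ) := by
  have heq : (fun x => wt x k l) = (Set.Ioo y₀ y₁).indicator (fun x => wt x k l) := by
    funext x
    by_cases hx : x ∈ Set.Ioo y₀ y₁
    · rw [Set.indicator_of_mem hx]
    · rw [Set.indicator_of_notMem hx, hwt.vanish x hx]
      rfl
  rw [heq]
  rw [aestronglyMeasurable_indicator_iff measurableSet_Ioo]
  exact ((hwt.smooth k l).continuousOn).aestronglyMeasurable measurableSet_Ioo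

lemma wt_entry_le (hwt : IsWeightMatrix wt y₀ y₁) (x : ℝ) (k l : Fin N) : ‖wt x k l‖ ≤ (wt x).trace.re :=
  psd_norm_le_trace (wt_psd hwt x) k l

lemma wt_scalar_integrable (hwt : IsWeightMatrix wt y₀ y₁) (P Q : Polynomial ℂ) (k l : Fin N) :
    Integrable (fun x : ℝ => P.eval (x : ℂ) * wt x k l * star (Q.eval (x : ℂ))) := by
  have contP : Continuous fun x : ℝ => P.eval (x : ℂ) :=
    P.continuous.comp Complex.continuous_ofReal
  have contQ : Continuous fun x : ℝ => star (Q.eval (x : ℂ)) :=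
    continuous_star.comp (Q.continuous.comp Complex.continuous_ofReal)
  set R := P * Q with hR
  set C := ∑ m ∈ Finset.range (R.natDegree + 1), ‖R.coeff m‖ with hC
  have hC0 : 0 ≤ C := Finset.sum_nonneg fun m _ => norm_nonneg _
  have hgint : Integrable (fun x : ℝ =>
      C * ((∑ m ∈ Finset.range (R.natDegree + 1), |x| ^ m) * (wt x).trace.re)) := by
    have heq : (fun x : ℝ =>
        C * ((∑ m ∈ Finset.range (R.natDegree + 1), |x| ^ m) * (wt x).trace.re))
        = fun x : ℝ => C * ∑ m ∈ Finset.range (R.natDegree + 1),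
            |x| ^ m * (wt x).trace.re := by
      funext x
      rw [show (∑ m ∈ Finset.range (R.natDegree + 1), |x| ^ m) * (wt x).trace.re
        = ∑ m ∈ Finset.range (R.natDegree + 1), |x| ^ m * (wt x).trace.re from
        Finset.sum_mul _ _ _]
    rw [heq]
    exact (integrable_finset_sum _ fun m _ => hwt.moments m).const_mul C
  refine Integrable.mono' hgint ?_ (Filter.Eventually.of_forall fun x => ?_)
  · exact ((contP.aestronglyMeasurable.mul (wt_entry_aesm hwt k l)).mul
      contQ.aestronglyMeasurable)
  · rw [norm_mul, norm_mul, norm_star]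
    have h1 : ‖P.eval (x : ℂ)‖ * ‖Q.eval (x : ℂ)‖ ≤
        C * ∑ m ∈ Finset.range (R.natDegree + 1), |x| ^ m := by
      have := poly_norm_bound R x
      rwa [hR, Polynomial.eval_mul, norm_mul] at this
    have h2 := wt_entry_le hwt x k l
    calc ‖P.eval (x : ℂ)‖ * ‖wt x k l‖ * ‖Q.eval (x : ℂ)‖
        = (‖P.eval (x : ℂ)‖ * ‖Q.eval (x : ℂ)‖) * ‖wt x k l‖ := by ring
      _ ≤ (C * ∑ m ∈ Finset.range (R.natDegree + 1), |x| ^ m) * (wt x).trace.re := by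
          refine mul_le_mul h1 h2 (norm_nonneg _) ?_
          exact le_trans (mul_nonneg (norm_nonneg _) (norm_nonneg _)) h1
      _ = C * ((∑ m ∈ Finset.range (R.natDegree + 1), |x| ^ m) * (wt x).trace.re) := by ring

lemma entry_expand (p q : MatPoly N) (i j : Fin N) (x : ℝ) :
    (evalM p x * wt x * (evalM q x)ᴴ) i j
      = ∑ k, ∑ l, (p i l).eval (x : ℂ) * wt x l k * star ((q j k).eval (x : ℂ)) := by
  simp only [Matrix.mul_apply, Matrix.conjTranspose_apply, Finset.sum_mul, evalM,
    Matrix.map_apply]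

lemma ip_entry_integrable (hwt : IsWeightMatrix wt y₀ y₁) (p q : MatPoly N) (i j : Fin N) :
    Integrable (fun x : ℝ => (evalM p x * wt x * (evalM q x)ᴴ) i j) := by
  have : (fun x : ℝ => (evalM p x * wt x * (evalM q x)ᴴ) i j)
      = fun x : ℝ => ∑ k, ∑ l, (p i l).eval (x : ℂ) * wt x l k * star ((q j k).eval (x : ℂ)) := by
    funext x
    exact entry_expand p q i j x
  rw [this]
  exact integrable_finset_sum _ fun k _ =>
    integrable_finset_sum _ fun l _ => wt_scalar_integrable hwt (p i l) (q j k) l k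

lemma ip_entry_continuousOn (hwt : IsWeightMatrix wt y₀ y₁) (p q : MatPoly N) (i j : Fin N) :
    ContinuousOn (fun x : ℝ => (evalM p x * wt x * (evalM q x)ᴴ) i j) (Set.Ioo y₀ y₁) := by
  have : (fun x : ℝ => (evalM p x * wt x * (evalM q x)ᴴ) i j)
      = fun x : ℝ => ∑ k, ∑ l, (p i l).eval (x : ℂ) * wt x l k * star ((q j k).eval (x : ℂ)) := by
    funext x
    exact entry_expand p q i j x
  rw [this]
  refine continuousOn_finset_sum _ fun k _ => continuousOn_finset_sum _ fun l _ => ?_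
  refine ContinuousOn.mul (ContinuousOn.mul ?_ ?_) ?_
  · exact ((p i l).continuous.comp Complex.continuous_ofReal).continuousOn
  · exact (hwt.smooth l k).continuousOn
  · exact (continuous_star.comp ((q j k).continuous.comp Complex.continuous_ofReal)).continuousOn

lemma mip_apply (p q : MatPoly N) (i j : Fin N) :
    mip wt p q i j = ∫ x : ℝ, (evalM p x * wt x * (evalM q x)ᴴ) i j := rfl

lemma mip_sum_left (hwt : IsWeightMatrix wt y₀ y₁) {α : Type*} (s : Finset α) (f : α → MatPoly N) (q : MatPoly N) :
    mip wt (∑ k ∈ s, f k) q = ∑ k ∈ s, mip wt (f k) q := by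
  ext i j
  rw [Matrix.sum_apply, mip_apply]
  have : (fun x : ℝ => (evalM (∑ k ∈ s, f k) x * wt x * (evalM q x)ᴴ) i j)
      = fun x : ℝ => ∑ k ∈ s, (evalM (f k) x * wt x * (evalM q x)ᴴ) i j := by
    funext x
    rw [evalM_sum, Finset.sum_mul, Finset.sum_mul, Matrix.sum_apply]
  rw [this, integral_finset_sum _ fun k _ => ip_entry_integrable hwt (f k) q i j]
  rfl

lemma mip_sum_right (hwt : IsWeightMatrix wt y₀ y₁) {α : Type*} (s : Finset α) (p : MatPoly N) (f : α → MatPoly N) :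
    mip wt p (∑ k ∈ s, f k) = ∑ k ∈ s, mip wt p (f k) := by
  ext i j
  rw [Matrix.sum_apply, mip_apply]
  have : (fun x : ℝ => (evalM p x * wt x * (evalM (∑ k ∈ s, f k) x)ᴴ) i j)
      = fun x : ℝ => ∑ k ∈ s, (evalM p x * wt x * (evalM (f k) x)ᴴ) i j := by
    funext x
    rw [evalM_sum]
    rw [show (∑ k ∈ s, evalM (f k) x)ᴴ = ∑ k ∈ s, (evalM (f k) x)ᴴ by
      simp [Matrix.conjTranspose_sum]]
    rw [Finset.mul_sum, Matrix.sum_apply]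
  rw [this, integral_finset_sum _ fun k _ => ip_entry_integrable hwt p (f k) i j]
  rfl

lemma mip_csmul_left (hwt : IsWeightMatrix wt y₀ y₁) (A : Mat N) (p q : MatPoly N) :
    mip wt (csmul A p) q = A * mip wt p q := by
  ext i j
  rw [Matrix.mul_apply, mip_apply]
  have : (fun x : ℝ => (evalM (csmul A p) x * wt x * (evalM q x)ᴴ) i j)
      = fun x : ℝ => ∑ k, A i k * (evalM p x * wt x * (evalM q x)ᴴ) k j := by
    funext x
    rw [evalM_csmul, mul_assoc, mul_assoc, Matrix.mul_apply]
    exact Finset.sum_congr rfl fun k _ => by rw [← Matrix.mul_assoc]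
  rw [this, integral_finset_sum _ fun k _ =>
    (ip_entry_integrable hwt p q k j).const_mul (A i k)]
  exact Finset.sum_congr rfl fun k _ => by
    rw [integral_const_mul, ← mip_apply]

lemma mip_csmul_right (hwt : IsWeightMatrix wt y₀ y₁) (A : Mat N) (p q : MatPoly N) :
    mip wt p (csmul A q) = mip wt p q * Aᴴ := by
  ext i j
  rw [Matrix.mul_apply, mip_apply]
  have : (fun x : ℝ => (evalM p x * wt x * (evalM (csmul A q) x)ᴴ) i j)
      = fun x : ℝ => ∑ k, (evalM p x * wt x * (evalM q x)ᴴ) i k * Aᴴ k j := by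
    funext x
    rw [evalM_csmul, Matrix.conjTranspose_mul, ← mul_assoc, Matrix.mul_apply]
  rw [this, integral_finset_sum _ fun k _ =>
    (ip_entry_integrable hwt p q i k).mul_const (Aᴴ k j)]
  exact Finset.sum_congr rfl fun k _ => by
    rw [integral_mul_const, ← mip_apply]

/-! ### The Gram matrix is positive definite -/

lemma dot_expand {N' : ℕ} (M : Matrix (Fin N') (Fin N') ℂ) (v : Fin N' → ℂ) :
    dotProduct (star v) (M *ᵥ v) = ∑ i, ∑ j, star (v i) * M i j * v j := by
  simp only [dotProduct, Matrix.mulVec, Pi.star_apply, Finset.mul_sum]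
  exact Finset.sum_congr rfl fun i _ => Finset.sum_congr rfl fun j _ => by
    rw [mul_assoc]

lemma pointwise_psd (hwt : IsWeightMatrix wt y₀ y₁) (p : MatPoly N) (x : ℝ) :
    (evalM p x * wt x * (evalM p x)ᴴ).PosSemidef :=
  (wt_psd hwt x).mul_mul_conjTranspose_same (evalM p x)

lemma gram_posdef (hwt : IsWeightMatrix wt y₀ y₁) (p : MatPoly N) (n : ℕ) (hdeg : ∀ i j, (p i j).natDegree ≤ n)
    (hlead : IsUnit (coeffMat p n)) : (mip wt p p).PosDef := by
  set A : ℝ → Mat N := fun x => evalM p x * wt x * (evalM p x)ᴴ with hA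
  refine Matrix.PosDef.of_dotProduct_mulVec_pos ?_ ?_
  · -- Hermitian
    ext i j
    rw [Matrix.conjTranspose_apply, mip_apply, mip_apply, Complex.star_def, ← integral_conj]
    refine integral_congr_ae (Filter.Eventually.of_forall fun x => ?_)
    have := (pointwise_psd hwt p x).isHermitian
    calc (starRingEnd ℂ) ((evalM p x * wt x * (evalM p x)ᴴ) j i)
        = (evalM p x * wt x * (evalM p x)ᴴ)ᴴ i j := rfl
      _ = (evalM p x * wt x * (evalM p x)ᴴ) i j := by rw [this]
  · -- positivity
    intro v hv
    set hfun : ℝ → ℂ := fun x => ∑ i, ∑ j, star (v i) * A x i j * v j with hhfun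
    have hterm_int : ∀ (i j : Fin N),
        Integrable (fun x => star (v i) * A x i j * v j) := fun i j =>
      ((ip_entry_integrable hwt p p i j).const_mul (star (v i))).mul_const (v j)
    have hfun_int : Integrable hfun :=
      integrable_finset_sum _ fun i _ => integrable_finset_sum _ fun j _ => hterm_int i j
    -- quadratic form equals the integral of hfun
    have hqf : dotProduct (star v) ((mip wt p p) *ᵥ v) = ∫ x, hfun x := by
      rw [dot_expand]
      have step1 : ∀ i j : Fin N, star (v i) * (mip wt p p) i j * v j
          = ∫ x, star (v i) * A x i j * v j := by
        intro i j
        rw [mip_apply, ← integral_const_mul, ← integral_mul_const]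
      calc ∑ i, ∑ j, star (v i) * (mip wt p p) i j * v j
          = ∑ i, ∑ j, ∫ x, star (v i) * A x i j * v j :=
            Finset.sum_congr rfl fun i _ => Finset.sum_congr rfl fun j _ => step1 i j
        _ = ∑ i, ∫ x, ∑ j, star (v i) * A x i j * v j :=
            Finset.sum_congr rfl fun i _ =>
              (integral_finset_sum _ fun j _ => hterm_int i j).symm
        _ = ∫ x, hfun x :=
            (integral_finset_sum _ fun i _ =>
              integrable_finset_sum _ fun j _ => hterm_int i j).symm
    -- hfun is the quadratic form of the pointwise psd matrix
    have hfun_eq : ∀ x, hfun x = dotProduct (star v) ((A x) *ᵥ v) := fun x =>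
      (dot_expand (A x) v).symm
    have hfun_nonneg : ∀ x, 0 ≤ hfun x := by
      intro x
      rw [hfun_eq x]
      exact (pointwise_psd hwt p x).dotProduct_mulVec_nonneg v
    set g : ℝ → ℝ := fun x => (hfun x).re with hg
    have hfun_real : ∀ x, hfun x = ((g x : ℝ) : ℂ) := by
      intro x
      have h := Complex.nonneg_iff.mp (hfun_nonneg x)
      apply Complex.ext
      · simp [hg]
      · simp [hg, ← h.2]
    have hg_nonneg : ∀ x, 0 ≤ g x := fun x => (Complex.nonneg_iff.mp (hfun_nonneg x)).1
    have hg_int : Integrable g := by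
      have := hfun_int.re
      simpa [hg] using this
    have hint_eq : (∫ x, hfun x) = ((∫ x, g x : ℝ) : ℂ) := by
      rw [show hfun = fun x => ((g x : ℝ) : ℂ) from funext hfun_real]
      exact integral_ofReal
    -- find a point where g is positive
    set s : Fin N → Polynomial ℂ := fun k => ∑ i, Polynomial.C (star (v i)) * p i k with hs
    have hsne : ∃ k, s k ≠ 0 := by
      by_contra hcon
      push_neg at hcon
      have hcoeff : ∀ k, Matrix.vecMul (star v) (coeffMat p n) k = 0 := by
        intro k
        have := congrArg (fun q => q.coeff n) (hcon k)
        simp only [hs, Polynomial.finset_sum_coeff, Polynomial.coeff_C_mul,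
          Polynomial.coeff_zero] at this
        simpa [Matrix.vecMul, dotProduct, coeffMat] using this
      have hvm : Matrix.vecMul (star v) (coeffMat p n) = 0 := funext hcoeff
      have hinv : coeffMat p n * (coeffMat p n)⁻¹ = 1 :=
        Matrix.mul_nonsing_inv _ ((Matrix.isUnit_iff_isUnit_det _).mp hlead)
      have : star v = 0 := by
        have h1 : Matrix.vecMul (star v) (coeffMat p n * (coeffMat p n)⁻¹) = star v := by
          rw [hinv, Matrix.vecMul_one]
        rw [← Matrix.vecMul_vecMul, hvm, Matrix.zero_vecMul] at h1
        exact h1.symm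
      exact hv (by simpa using congrArg star this)
    obtain ⟨k0, hk0⟩ := hsne
    have hroots : {x : ℝ | (s k0).eval (x : ℂ) = 0}.Finite := by
      have hfin : {z : ℂ | (s k0).IsRoot z}.Finite := Polynomial.finite_setOf_isRoot hk0
      have : {x : ℝ | (s k0).eval (x : ℂ) = 0}
          = (fun x : ℝ => (x : ℂ)) ⁻¹' {z : ℂ | (s k0).IsRoot z} := rfl
      rw [this]
      exact Set.Finite.preimage (Set.injOn_of_injective Complex.ofReal_injective) hfin
    have hIoo_inf : (Set.Ioo y₀ y₁).Infinite := Set.Ioo_infinite hwt.lt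
    obtain ⟨x₀', hx₀'⟩ := (hIoo_inf.diff hroots).nonempty
    have hxIoo : x₀' ∈ Set.Ioo y₀ y₁ := hx₀'.1
    have hxroot : (s k0).eval (x₀' : ℂ) ≠ 0 := hx₀'.2
    -- g is positive at x₀'
    have hgpos : 0 < g x₀' := by
      set u : Fin N → ℂ := ((evalM p x₀')ᴴ) *ᵥ v with hu
      have huk : u k0 = star ((s k0).eval (x₀' : ℂ)) := by
        simp only [hu, Matrix.mulVec, dotProduct, Matrix.conjTranspose_apply, hs,
          Polynomial.eval_finset_sum, Polynomial.eval_mul, Polynomial.eval_C, star_sum,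
          star_mul', star_star, evalM, Matrix.map_apply]
        exact Finset.sum_congr rfl fun i _ => mul_comm _ _
      have hune : u ≠ 0 := by
        intro h0
        apply hxroot
        have : u k0 = 0 := by rw [h0]; rfl
        rw [huk] at this
        simpa using congrArg star this
      have hquad : hfun x₀' = dotProduct (star u) (wt x₀' *ᵥ u) := by
        rw [hfun_eq x₀', hA]
        rw [show (evalM p x₀' * wt x₀' * (evalM p x₀')ᴴ) *ᵥ v
            = evalM p x₀' *ᵥ (wt x₀' *ᵥ ((evalM p x₀')ᴴ *ᵥ v)) by
          rw [Matrix.mulVec_mulVec, Matrix.mulVec_mulVec]]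
        rw [Matrix.dotProduct_mulVec]
        congr 1
        rw [hu, Matrix.star_mulVec, Matrix.conjTranspose_conjTranspose]
      have hpos : 0 < hfun x₀' := by
        rw [hquad]
        exact (hwt.posdef x₀' hxIoo).dotProduct_mulVec_pos hune
      exact (Complex.lt_def.mp hpos).1
    -- g is continuous on the interval
    have hg_cont : ContinuousOn g (Set.Ioo y₀ y₁) := by
      have hh_cont : ContinuousOn hfun (Set.Ioo y₀ y₁) := by
        refine continuousOn_finset_sum _ fun i _ => continuousOn_finset_sum _ fun j _ => ?_
        exact (continuousOn_const.mul (ip_entry_continuousOn hwt p p i j)).mul continuousOn_const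
      exact Complex.continuous_re.comp_continuousOn hh_cont
    -- the integral is positive
    have hgint_pos : 0 < ∫ x, g x := by
      rw [integral_pos_iff_support_of_nonneg hg_nonneg hg_int]
      set U : Set ℝ := Set.Ioo y₀ y₁ ∩ g ⁻¹' (Set.Ioi 0) with hU
      have hUopen : IsOpen U := hg_cont.isOpen_inter_preimage isOpen_Ioo isOpen_Ioi
      have hUne : U.Nonempty := ⟨x₀', hxIoo, hgpos⟩
      have hUsub : U ⊆ Function.support g := fun x hx => ne_of_gt hx.2
      exact lt_of_lt_of_le (hUopen.measure_pos volume hUne) (measure_mono hUsub)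
    rw [hqf, hint_eq]
    exact Complex.zero_lt_real.mpr hgint_pos

end Weight


/-- **Main Theorem, part (f): intertwined operators transfer.**  If `p̃(x,n) := p(x,n)·ν`
is a sequence of orthogonal matrix polynomials for `w̃`, `η ∈ D(w)` with eigenvalues
`Λ′ₙ`, and `η̃` satisfies `ην = νη̃`, then `p̃(x,n)·η̃ = Λ′ₙ p̃(x,n)` for every `n`; in
particular `η̃ ∈ D(w̃)`, i.e. the monic orthogonal matrix polynomials of `w̃` are
eigenfunctions of `η̃`. -/
theorem intertwined_operators_transfer {N : ℕ} {x₀ x₁ y₀ y₁ : ℝ}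
    (w wt : ℝ → Mat N)
    (hw : IsWeightMatrix w x₀ x₁) (hwt : IsWeightMatrix wt y₀ y₁)
    (P : ℕ → MatPoly N) (hP : IsMonicOMP w P)
    -- ν is a matrix differential operator with polynomial coefficients c, of order ≤ ℓν:
    (ℓν : ℕ) (c : ℕ → MatPoly N)
    -- p̃(x,n) := p(x,n)·ν is a sequence of orthogonal matrix polynomials for w̃:
    (hPt : IsOMPseq wt fun n => act c ℓν (P n))
    -- η ∈ D(w), with eigenvalues Λ′ₙ:
    (ℓη : ℕ) (e : ℕ → MatPoly N) (Λ' : ℕ → Mat N)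
    (heig : ∀ n, act e ℓη (P n) = csmul (Λ' n) (P n))
    -- η̃ has polynomial coefficients and satisfies ην = νη̃, i.e. (p·η)·ν = (p·ν)·η̃:
    (ℓη' : ℕ) (d : ℕ → MatPoly N)
    (hint : ∀ p : MatPoly N, act c ℓν (act e ℓη p) = act d ℓη' (act c ℓν p)) :
    (∀ n, act d ℓη' (act c ℓν (P n)) = csmul (Λ' n) (act c ℓν (P n))) ∧
    ∀ Q : ℕ → MatPoly N, IsMonicOMP wt Q → ∀ n, ∃ Λ : Mat N,
      act d ℓη' (Q n) = csmul Λ (Q n) := by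
  set Pt : ℕ → MatPoly N := fun n => act c ℓν (P n) with hPtdef
  have part1 : ∀ n, act d ℓη' (Pt n) = csmul (Λ' n) (Pt n) := by
    intro n
    rw [hPtdef, ← hint (P n), heig n, act_csmul]
  refine ⟨part1, ?_⟩
  intro Q hQ n
  have hQlead : ∀ m, IsUnit (coeffMat (Q m) m) := fun m => by
    rw [hQ.monic m]; exact isUnit_one
  -- expand Q n in terms of Pt
  obtain ⟨A, hQn⟩ := expand Pt hPt.degle hPt.lead n (Q n)
    (fun m hm => coeffMat_zero_of_deg (hQ.degle n) hm)
  -- coefficients A j vanish for j < n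
  have hAzero : ∀ j, j < n → A j = 0 := by
    intro j hj
    -- mip wt (Q n) (Pt j) = 0 via the Q-expansion of Pt j
    obtain ⟨B, hPtj⟩ := expand Q hQ.degle hQlead j (Pt j)
      (fun m hm => coeffMat_zero_of_deg (hPt.degle j) hm)
    have horth1 : mip wt (Q n) (Pt j) = 0 := by
      rw [hPtj, mip_sum_right hwt]
      refine Finset.sum_eq_zero fun k hk => ?_
      rw [mip_csmul_right hwt]
      have hkn : n ≠ k := by
        have := Finset.mem_range.mp hk
        omega
      rw [hQ.orth n k hkn, Matrix.zero_mul]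
    -- mip wt (Q n) (Pt j) = A j * Gram j
    have horth2 : mip wt (Q n) (Pt j) = A j * mip wt (Pt j) (Pt j) := by
      rw [hQn, mip_sum_left hwt]
      rw [Finset.sum_eq_single j]
      · rw [mip_csmul_left hwt]
      · intro k hk hkj
        rw [mip_csmul_left hwt, hPt.orth k j hkj, Matrix.mul_zero]
      · intro hj'
        exact absurd (Finset.mem_range.mpr (by omega)) hj'
    have hgram : (mip wt (Pt j) (Pt j)).PosDef :=
      gram_posdef hwt (Pt j) j (hPt.degle j) (hPt.lead j)
    have hginv : mip wt (Pt j) (Pt j) * (mip wt (Pt j) (Pt j))⁻¹ = 1 :=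
      Matrix.mul_nonsing_inv _ ((Matrix.isUnit_iff_isUnit_det _).mp hgram.isUnit)
    have : A j * mip wt (Pt j) (Pt j) = 0 := by rw [← horth2, horth1]
    calc A j = A j * (mip wt (Pt j) (Pt j) * (mip wt (Pt j) (Pt j))⁻¹) := by
          rw [hginv, mul_one]
      _ = (A j * mip wt (Pt j) (Pt j)) * (mip wt (Pt j) (Pt j))⁻¹ := by rw [mul_assoc]
      _ = 0 := by rw [this, Matrix.zero_mul]
  -- hence Q n = csmul (A n) (Pt n)
  have hQn' : Q n = csmul (A n) (Pt n) := by
    rw [hQn, Finset.sum_range_succ]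
    rw [Finset.sum_eq_zero fun k hk => by
      rw [hAzero k (Finset.mem_range.mp hk), csmul_zero_left]]
    rw [zero_add]
  -- A n is invertible
  have hAn_mul : A n * coeffMat (Pt n) n = 1 := by
    have := hQ.monic n
    rw [hQn', coeffMat_csmul] at this
    exact this
  have hAn_unit : IsUnit (A n) :=
    ⟨⟨A n, coeffMat (Pt n) n, hAn_mul, mul_eq_one_comm.mp hAn_mul⟩, rfl⟩
  refine ⟨A n * Λ' n * (A n)⁻¹, ?_⟩
  have hAninv : (A n)⁻¹ * A n = 1 :=
    Matrix.nonsing_inv_mul _ ((Matrix.isUnit_iff_isUnit_det _).mp hAn_unit)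
  rw [hQn', act_csmul, part1 n, csmul_csmul, csmul_csmul]
  congr 1
  rw [mul_assoc, hAninv, mul_one]
end

section
/- (Corollary on symmetric operators of given order.) Let w be a weight matrix and suppose δ ∈ D(w) has order m and admits a w-adjoint δ† which lies in D(w) and has order at most m. Then at least one of the operators ½(δ + δ†) and (i/2)(δ − δ†) is a w-symmetric element of D(w) of order exactly m; in particular D(w) contains a w-symmetric matrix differential operator of order m. -/
open MeasureTheory Polynomial Matrix Set Filter Topology
open scoped ComplexOrder

lemma psd_diag_re_nonneg {n : Type*} [Fintype n] [DecidableEq n]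
    {M : Matrix n n ℂ} (h : M.PosSemidef) (k : n) : 0 ≤ (M k k).re := by
  have h1 := h.re_dotProduct_nonneg (Pi.single k 1)
  have he : star (Pi.single k (1:ℂ)) ⬝ᵥ M *ᵥ Pi.single k (1:ℂ) = M k k := by
    rw [← Pi.single_star, star_one, Matrix.mulVec_single, single_dotProduct]
    simp
  rwa [he] at h1

lemma psd_trace_re_nonneg {n : Type*} [Fintype n] [DecidableEq n]
    {M : Matrix n n ℂ} (h : M.PosSemidef) : 0 ≤ M.trace.re := by
  rw [Matrix.trace, Complex.re_sum]
  exact Finset.sum_nonneg fun k _ => psd_diag_re_nonneg h k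

lemma psd_abs_entry_le_trace {n : Type*} [Fintype n] [DecidableEq n]
    {M : Matrix n n ℂ} (h : M.PosSemidef) (k l : n) : ‖M k l‖ ≤ M.trace.re := by
  have hdiag : ∀ i, 0 ≤ (M i i).re := psd_diag_re_nonneg h
  have htr : ∀ s : Finset n, (∑ i ∈ s, (M i i).re) ≤ M.trace.re := by
    intro s
    rw [Matrix.trace, Complex.re_sum]
    exact Finset.sum_le_sum_of_subset_of_nonneg (Finset.subset_univ s)
      (fun i _ _ => hdiag i)
  have hherm : ∀ i j, (starRingEnd ℂ) (M j i) = M i j := fun i j => by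
    have := congrFun (congrFun h.1 i) j
    rwa [Matrix.conjTranspose_apply] at this
  by_cases hkl : k = l
  · subst hkl
    have him0 : (M k k).im = 0 := by
      have := congrArg Complex.im (hherm k k)
      simp at this; linarith
    have habs : ‖M k k‖ = |(M k k).re| := by
      rw [Complex.norm_def, Complex.normSq_apply, him0]
      simp [Real.sqrt_mul_self_eq_abs]
    rw [habs, abs_of_nonneg (hdiag k)]
    have h1 := htr {k}; simpa using h1
  · by_cases hz : M k l = 0
    · rw [hz]; simpa using psd_trace_re_nonneg h
    · set z := M k l with hzdef
      set r : ℝ := ‖z‖ with hrdef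
      have hr0 : 0 < r := by
        rw [hrdef]; exact (norm_pos_iff.mpr hz)
      have hr' : (r:ℂ) ≠ 0 := by exact_mod_cast hr0.ne'
      set t : ℂ := -z / (r : ℂ) with htdef
      set v : n → ℂ := Pi.single k t + Pi.single l 1 with hvdef
      have hzz : (starRingEnd ℂ) z * z = (r:ℂ)^2 := by
        rw [mul_comm, Complex.mul_conj, ← Complex.sq_norm, ← hrdef]
        push_cast; ring
      have hQ : star v ⬝ᵥ M *ᵥ v = M k k + M l l - 2 * (r : ℂ) := by
        have hMv : M *ᵥ v = (fun i => M i k * t) + fun i => M i l * 1 := by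
          rw [hvdef, Matrix.mulVec_add, Matrix.mulVec_single, Matrix.mulVec_single]; rfl
        have hsv : star v = Pi.single k (star t) + Pi.single l 1 := by
          rw [hvdef, star_add, ← Pi.single_star, ← Pi.single_star, star_one]
        rw [hsv, hMv, add_dotProduct, single_dotProduct,
          single_dotProduct]
        change star t * (M k k * t + M k l * 1) + 1 * (M l k * t + M l l * 1) = _
        have hlk : M l k = (starRingEnd ℂ) z := (hherm l k).symm
        rw [hlk, ← hzdef, htdef]
        rw [Complex.star_def, map_div₀, map_neg, Complex.conj_ofReal]
        field_simp
        linear_combination ((M k k) - 2*(r:ℂ)) * hzz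
      have h2 := h.re_dotProduct_nonneg v
      rw [hQ] at h2
      have h2' : 2 * r ≤ (M k k).re + (M l l).re := by
        simp only [RCLike.re_to_complex, Complex.sub_re, Complex.add_re, Complex.mul_re,
          Complex.ofReal_re, Complex.ofReal_im, Complex.re_ofNat, Complex.im_ofNat] at h2
        linarith
      have h3 : (M k k).re + (M l l).re ≤ M.trace.re := by
        have := htr {k, l}
        rwa [Finset.sum_pair hkl] at this
      calc ‖M k l‖ = r := rfl
        _ ≤ 2 * r := by linarith
        _ ≤ M.trace.re := le_trans h2' h3

section Aux

variable {N : ℕ} {x₀ x₁ : ℝ} {w : ℝ → Mat N}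

lemma w_conjTranspose (hw : IsWeightMatrix w x₀ x₁) (x : ℝ) : (w x)ᴴ = w x := by
  by_cases hx : x ∈ Set.Ioo x₀ x₁
  · exact hw.herm x hx
  · rw [hw.vanish x hx]; simp

lemma w_trace_re_nonneg (hw : IsWeightMatrix w x₀ x₁) (x : ℝ) : 0 ≤ (w x).trace.re := by
  by_cases hx : x ∈ Set.Ioo x₀ x₁
  · exact psd_trace_re_nonneg (hw.posdef x hx).posSemidef
  · rw [hw.vanish x hx]; simp

lemma w_entry_le (hw : IsWeightMatrix w x₀ x₁) (x : ℝ) (k l : Fin N) :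
    ‖w x k l‖ ≤ (w x).trace.re := by
  by_cases hx : x ∈ Set.Ioo x₀ x₁
  · exact psd_abs_entry_le_trace (hw.posdef x hx).posSemidef k l
  · rw [hw.vanish x hx]; simp

lemma w_meas (hw : IsWeightMatrix w x₀ x₁) (k l : Fin N) :
    AEStronglyMeasurable (fun x => w x k l) (volume : Measure ℝ) := by
  have heq : (fun x => w x k l) = (Set.Ioo x₀ x₁).indicator (fun x => w x k l) := by
    funext x
    by_cases hx : x ∈ Set.Ioo x₀ x₁
    · rw [Set.indicator_of_mem hx]
    · rw [Set.indicator_of_notMem hx, hw.vanish x hx]; simp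
  rw [heq]
  exact (aestronglyMeasurable_indicator_iff measurableSet_Ioo).2
    ((hw.smooth k l).continuousOn.aestronglyMeasurable measurableSet_Ioo)

lemma poly_norm_le (r : Polynomial ℂ) (x : ℝ) :
    ‖r.eval (x:ℂ)‖ ≤ ∑ n ∈ Finset.range (r.natDegree + 1), ‖r.coeff n‖ * |x| ^ n := by
  rw [Polynomial.eval_eq_sum_range]
  refine le_trans (norm_sum_le _ _) (le_of_eq (Finset.sum_congr rfl fun n _ => ?_))
  rw [norm_mul, norm_pow, Complex.norm_real, Real.norm_eq_abs]

lemma integrable_rws (hw : IsWeightMatrix w x₀ x₁) (r s : Polynomial ℂ) (k l : Fin N) :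
    Integrable fun x : ℝ => r.eval (x:ℂ) * w x k l * star (s.eval (x:ℂ)) := by
  set d := (r * s).natDegree with hd
  have hcont : ∀ t : Polynomial ℂ, Continuous fun x : ℝ => t.eval (x:ℂ) :=
    fun t => (t.continuous_aeval).comp Complex.continuous_ofReal
  refine Integrable.mono'
    (g := fun x => ∑ n ∈ Finset.range (d + 1), ‖(r*s).coeff n‖ * (|x| ^ n * (w x).trace.re))
    (integrable_finset_sum _ fun n _ => (hw.moments n).const_mul _)
    (((hcont r).aestronglyMeasurable.mul (w_meas hw k l)).mul
      ((continuous_star.comp (hcont s)).aestronglyMeasurable))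
    (Filter.Eventually.of_forall fun x => ?_)
  have h1 : ‖r.eval (x:ℂ) * w x k l * star (s.eval (x:ℂ))‖
      = ‖(r*s).eval (x:ℂ)‖ * ‖w x k l‖ := by
    rw [norm_mul, norm_mul, norm_star, Polynomial.eval_mul, norm_mul]; ring
  rw [h1]
  calc ‖(r*s).eval (x:ℂ)‖ * ‖w x k l‖
      ≤ (∑ n ∈ Finset.range (d + 1), ‖(r*s).coeff n‖ * |x| ^ n) * (w x).trace.re := by
        apply mul_le_mul (poly_norm_le (r*s) x) (w_entry_le hw x k l) (norm_nonneg _)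
        exact Finset.sum_nonneg fun n _ => by positivity
    _ = ∑ n ∈ Finset.range (d + 1), ‖(r*s).coeff n‖ * (|x| ^ n * (w x).trace.re) := by
        rw [Finset.sum_mul]; exact Finset.sum_congr rfl fun n _ => by ring

lemma integrable_mip_entry (hw : IsWeightMatrix w x₀ x₁) (p q : MatPoly N) (i j : Fin N) :
    Integrable fun x : ℝ => (evalM p x * w x * (evalM q x)ᴴ) i j := by
  have heq : (fun x : ℝ => (evalM p x * w x * (evalM q x)ᴴ) i j)
      = fun x : ℝ => ∑ l : Fin N, ∑ k : Fin N,
          (p i k).eval (x:ℂ) * w x k l * star ((q j l).eval (x:ℂ)) := by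
    funext x
    simp [Matrix.mul_apply, Matrix.conjTranspose_apply, evalM, Matrix.map_apply,
      Finset.sum_mul]
  rw [heq]
  exact integrable_finset_sum _ fun l _ =>
    integrable_finset_sum _ fun k _ => integrable_rws hw _ _ _ _

-- algebraic lemmas on evalM
lemma evalM_add (p q : MatPoly N) (x : ℝ) : evalM (p + q) x = evalM p x + evalM q x := by
  ext i j; simp [evalM, Matrix.map_apply]

lemma evalM_smul (c : ℂ) (p : MatPoly N) (x : ℝ) : evalM (c • p) x = c • evalM p x := by
  ext i j; simp [evalM, Matrix.map_apply]

-- mip linearity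
lemma mip_add_left (hw : IsWeightMatrix w x₀ x₁) (p₁ p₂ q : MatPoly N) :
    mip w (p₁ + p₂) q = mip w p₁ q + mip w p₂ q := by
  ext i j
  simp only [mip, fip, Matrix.of_apply, Matrix.add_apply]
  rw [← integral_add (integrable_mip_entry hw p₁ q i j) (integrable_mip_entry hw p₂ q i j)]
  congr 1; funext x
  rw [evalM_add, Matrix.add_mul, Matrix.add_mul, Matrix.add_apply]

lemma mip_add_right (hw : IsWeightMatrix w x₀ x₁) (p q₁ q₂ : MatPoly N) :
    mip w p (q₁ + q₂) = mip w p q₁ + mip w p q₂ := by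
  ext i j
  simp only [mip, fip, Matrix.of_apply, Matrix.add_apply]
  rw [← integral_add (integrable_mip_entry hw p q₁ i j) (integrable_mip_entry hw p q₂ i j)]
  congr 1; funext x
  rw [evalM_add, Matrix.conjTranspose_add, Matrix.mul_add, Matrix.add_apply]

lemma mip_smul_left (c : ℂ) (p q : MatPoly N) :
    mip w (c • p) q = c • mip w p q := by
  ext i j
  simp only [mip, fip, Matrix.of_apply, Matrix.smul_apply]
  rw [← integral_smul]
  congr 1; funext x
  rw [evalM_smul, Matrix.smul_mul, Matrix.smul_mul, Matrix.smul_apply]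

lemma mip_smul_right (c : ℂ) (p q : MatPoly N) :
    mip w p (c • q) = (starRingEnd ℂ) c • mip w p q := by
  ext i j
  simp only [mip, fip, Matrix.of_apply, Matrix.smul_apply]
  rw [← integral_smul]
  congr 1; funext x
  rw [evalM_smul, Matrix.conjTranspose_smul, Matrix.mul_smul, Matrix.smul_apply,
    Complex.star_def]

lemma mip_conj (hw : IsWeightMatrix w x₀ x₁) (p q : MatPoly N) :
    (mip w q p)ᴴ = mip w p q := by
  ext i j
  simp only [mip, fip, Matrix.conjTranspose_apply, Matrix.of_apply]
  rw [Complex.star_def, ← integral_conj]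
  congr 1; funext x
  have : star ((evalM q x * w x * (evalM p x)ᴴ) j i)
      = ((evalM q x * w x * (evalM p x)ᴴ)ᴴ) i j := by
    rw [Matrix.conjTranspose_apply]
  rw [show (starRingEnd ℂ) ((evalM q x * w x * (evalM p x)ᴴ) j i)
      = ((evalM q x * w x * (evalM p x)ᴴ)ᴴ) i j from this]
  rw [Matrix.conjTranspose_mul, Matrix.conjTranspose_mul,
    Matrix.conjTranspose_conjTranspose, w_conjTranspose hw, Matrix.mul_assoc]

-- act linearity
lemma act_addfun (a b : ℕ → MatPoly N) (ℓ : ℕ) (p : MatPoly N) :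
    act (fun i => a i + b i) ℓ p = act a ℓ p + act b ℓ p := by
  simp only [act, mul_add, Finset.sum_add_distrib]

lemma act_smulfun (c : ℂ) (a : ℕ → MatPoly N) (ℓ : ℕ) (p : MatPoly N) :
    act (fun i => c • a i) ℓ p = c • act a ℓ p := by
  simp only [act, Finset.smul_sum, mul_smul_comm]

lemma act_subfun (a b : ℕ → MatPoly N) (ℓ : ℕ) (p : MatPoly N) :
    act (fun i => a i - b i) ℓ p = act a ℓ p - act b ℓ p := by
  simp only [act, mul_sub, Finset.sum_sub_distrib]

-- csmul linearity
lemma csmul_add (Λ₁ Λ₂ : Mat N) (p : MatPoly N) :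
    csmul (Λ₁ + Λ₂) p = csmul Λ₁ p + csmul Λ₂ p := by
  unfold csmul
  rw [← Matrix.add_mul]
  congr 1
  ext i j; simp [Matrix.map_apply]

lemma csmul_smul (c : ℂ) (Λ : Mat N) (p : MatPoly N) :
    csmul (c • Λ) p = c • csmul Λ p := by
  unfold csmul
  rw [← Matrix.smul_mul]
  congr 1
  ext i j
  simp [Matrix.map_apply, Polynomial.smul_C, Complex.coe_smul]

lemma evalM_sub (p q : MatPoly N) (x : ℝ) : evalM (p - q) x = evalM p x - evalM q x := by
  ext i j; simp [evalM, Matrix.map_apply]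

lemma mip_sub_left (hw : IsWeightMatrix w x₀ x₁) (p₁ p₂ q : MatPoly N) :
    mip w (p₁ - p₂) q = mip w p₁ q - mip w p₂ q := by
  ext i j
  simp only [mip, fip, Matrix.of_apply, Matrix.sub_apply]
  rw [← integral_sub (integrable_mip_entry hw p₁ q i j) (integrable_mip_entry hw p₂ q i j)]
  congr 1; funext x
  rw [evalM_sub, Matrix.sub_mul, Matrix.sub_mul, Matrix.sub_apply]

lemma mip_sub_right (hw : IsWeightMatrix w x₀ x₁) (p q₁ q₂ : MatPoly N) :
    mip w p (q₁ - q₂) = mip w p q₁ - mip w p q₂ := by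
  ext i j
  simp only [mip, fip, Matrix.of_apply, Matrix.sub_apply]
  rw [← integral_sub (integrable_mip_entry hw p q₁ i j) (integrable_mip_entry hw p q₂ i j)]
  congr 1; funext x
  rw [evalM_sub, Matrix.conjTranspose_sub, Matrix.mul_sub, Matrix.sub_apply]

lemma csmul_sub (Λ₁ Λ₂ : Mat N) (p : MatPoly N) :
    csmul (Λ₁ - Λ₂) p = csmul Λ₁ p - csmul Λ₂ p := by
  unfold csmul
  rw [← Matrix.sub_mul]
  congr 1
  ext i j; simp [Matrix.map_apply]

end Aux

/-- **Corollary on symmetric operators of given order.**  If `δ ∈ D(w)` has order `m`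
and admits a `w`-adjoint `δ† ∈ D(w)` of order at most `m`, then at least one of
`½(δ + δ†)` and `(i/2)(δ − δ†)` is a `w`-symmetric element of `D(w)` of order exactly
`m`; in particular `D(w)` contains a `w`-symmetric operator of order `m`. -/
theorem symmetric_operator_of_order {N : ℕ} {x₀ x₁ : ℝ}
    (w : ℝ → Mat N) (hw : IsWeightMatrix w x₀ x₁)
    (P : ℕ → MatPoly N) (hP : IsMonicOMP w P)
    (m : ℕ) (a b : ℕ → MatPoly N)
    -- δ = act a m has order exactly m:
    (haord : a m ≠ 0)
    -- δ ∈ D(w):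
    (heig : ∀ n, ∃ Λ : Mat N, act a m (P n) = csmul Λ (P n))
    -- δ† = act b m ∈ D(w) (of order at most m):
    (heig' : ∀ n, ∃ Λ : Mat N, act b m (P n) = csmul Λ (P n))
    -- δ† is a w-adjoint of δ:
    (hadj : ∀ p q : MatPoly N, mip w (act a m p) q = mip w p (act b m q)) :
    -- at least one of ½(δ + δ†), (i/2)(δ − δ†) works:
    ((∀ p q : MatPoly N,
        mip w (act (fun i => ((2 : ℂ))⁻¹ • (a i + b i)) m p) q
          = mip w p (act (fun i => ((2 : ℂ))⁻¹ • (a i + b i)) m q)) ∧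
      (∀ n, ∃ Λ : Mat N,
        act (fun i => ((2 : ℂ))⁻¹ • (a i + b i)) m (P n) = csmul Λ (P n)) ∧
      ((2 : ℂ))⁻¹ • (a m + b m) ≠ 0) ∨
    ((∀ p q : MatPoly N,
        mip w (act (fun i => (Complex.I / 2) • (a i - b i)) m p) q
          = mip w p (act (fun i => (Complex.I / 2) • (a i - b i)) m q)) ∧
      (∀ n, ∃ Λ : Mat N,
        act (fun i => (Complex.I / 2) • (a i - b i)) m (P n) = csmul Λ (P n)) ∧
      (Complex.I / 2) • (a m - b m) ≠ 0) := by
  have key : ∀ p q : MatPoly N, mip w (act b m p) q = mip w p (act a m q) := by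
    intro p q
    have h1 := congrArg Matrix.conjTranspose (hadj q p)
    rw [mip_conj hw p (act a m q), mip_conj hw (act b m p) q] at h1
    exact h1.symm
  by_cases hc : a m + b m = 0
  · -- use (i/2)(δ - δ†)
    right
    refine ⟨?_, ?_, ?_⟩
    · intro p q
      rw [act_smulfun, act_subfun, mip_smul_left, mip_sub_left hw, hadj p q, key p q,
        act_smulfun, act_subfun, mip_smul_right, mip_sub_right hw]
      rw [show (starRingEnd ℂ) (Complex.I/2) = -(Complex.I/2) by
        rw [map_div₀, Complex.conj_I, Complex.conj_ofNat, neg_div]]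
      rw [neg_smul, ← smul_neg, neg_sub]
    · intro n
      obtain ⟨Λ₁, h1⟩ := heig n
      obtain ⟨Λ₂, h2⟩ := heig' n
      exact ⟨(Complex.I/2) • (Λ₁ - Λ₂), by
        rw [act_smulfun, act_subfun, h1, h2, ← csmul_sub, ← csmul_smul]⟩
    · have hb : b m = -a m := (neg_eq_of_add_eq_zero_right hc).symm
      have h2 : a m - b m ≠ 0 := by
        rw [hb, sub_neg_eq_add]
        intro h
        apply haord
        refine Matrix.ext fun i j => ?_
        have h' : a m i j + a m i j = 0 := by
          simpa [Matrix.add_apply] using congrFun (congrFun h i) j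
        simpa using add_self_eq_zero.mp h'
      exact smul_ne_zero (div_ne_zero Complex.I_ne_zero two_ne_zero) h2
  · -- use ½(δ + δ†)
    left
    refine ⟨?_, ?_, ?_⟩
    · intro p q
      rw [act_smulfun, act_addfun, mip_smul_left, mip_add_left hw, hadj p q, key p q,
        act_smulfun, act_addfun, mip_smul_right, mip_add_right hw]
      rw [show (starRingEnd ℂ) ((2:ℂ))⁻¹ = (2:ℂ)⁻¹ by
        rw [map_inv₀, Complex.conj_ofNat]]
      rw [add_comm (mip w p (act b m q)) (mip w p (act a m q))]
    · intro n
      obtain ⟨Λ₁, h1⟩ := heig n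
      obtain ⟨Λ₂, h2⟩ := heig' n
      exact ⟨(2:ℂ)⁻¹ • (Λ₁ + Λ₂), by
        rw [act_smulfun, act_addfun, h1, h2, ← csmul_add, ← csmul_smul]⟩
    · exact smul_ne_zero (by norm_num) hc
end

section
/- (Characterization of degree-filtration preserving operators.) Let T be the linear operator on M_N(ℂ[x]) given by T(p) = ∑_{i=0}^ℓ p⁽ⁱ⁾(x) aᵢ(x) with aᵢ ∈ M_N(ℂ[x]). Then deg(T(p)) ≤ deg(p) for every matrix polynomial p if and only if deg(aᵢ) ≤ i for every 0 ≤ i ≤ ℓ. Consequently, the set of degree-filtration preserving matrix differential operators with polynomial coefficients is exactly the subalgebra (under composition) generated by right multiplication by constant matrices, the operator ∂ : p ↦ p′, and the operator s := ∂x : p ↦ p′·x. -/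
open MeasureTheory Polynomial Matrix Set Filter Topology
open scoped ComplexOrder

/-- Entrywise formal differentiation `∂ : p ↦ p′` as a linear endomorphism of the space
of matrix polynomials. -/
noncomputable def DOp (N : ℕ) : Module.End ℂ (MatPoly N) where
  toFun p := matD p
  map_add' p q := by
    ext i j
    simp [matD, Matrix.map_apply, Matrix.add_apply]
  map_smul' c p := by
    ext i j
    simp [matD, Matrix.map_apply, Matrix.smul_apply]

/-- Right multiplication by a matrix polynomial, as a linear endomorphism. -/
noncomputable def rmulOp (N : ℕ) (a : MatPoly N) : Module.End ℂ (MatPoly N) :=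
  LinearMap.mulRight ℂ a

/-- The operator `s = ∂x : p ↦ p′·x`. -/
noncomputable def SOp (N : ℕ) : Module.End ℂ (MatPoly N) :=
  (rmulOp N (scalarM N Polynomial.X)).comp (DOp N)


namespace Helper


variable {N : ℕ}

lemma matD_apply (p : MatPoly N) (i j : Fin N) : matD p i j = derivative (p i j) := rfl

lemma matD_iter_apply (k : ℕ) (p : MatPoly N) (i j : Fin N) :
    (matD^[k] p) i j = derivative^[k] (p i j) := by
  induction k generalizing p with
  | zero => rfl
  | succ k ih => rw [Function.iterate_succ_apply, Function.iterate_succ_apply, ih, matD_apply]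

lemma mdeg_le_iff {p : MatPoly N} {d : WithBot ℕ} :
    mdeg p ≤ d ↔ ∀ i j, (p i j).degree ≤ d := by
  unfold mdeg
  rw [Finset.sup_le_iff]
  constructor
  · intro h i j; exact h (i, j) (Finset.mem_univ _)
  · intro h ij _; exact h ij.1 ij.2

lemma degree_le_mdeg (p : MatPoly N) (i j : Fin N) : (p i j).degree ≤ mdeg p :=
  Finset.le_sup (f := fun ij : Fin N × Fin N => (p ij.1 ij.2).degree) (Finset.mem_univ (i, j))

lemma degree_derivative_add_one_le (q : Polynomial ℂ) :
    (derivative q).degree + 1 ≤ q.degree := by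
  by_cases hq : derivative q = 0
  · simp [hq]
  · have h : q ≠ 0 := fun h => hq (by simp [h])
    have hlt := degree_derivative_lt h
    generalize (derivative q).degree = A at *
    generalize q.degree = B at *
    cases A with
    | bot => simp
    | coe n =>
      cases B with
      | bot => exact absurd hlt (by simp)
      | coe m =>
        have h1 : n < m := by exact_mod_cast hlt
        have h2 : (((n+1 : ℕ)) : WithBot ℕ) ≤ (m : WithBot ℕ) := by exact_mod_cast h1
        exact h2

lemma degree_iter_derivative_add_le (q : Polynomial ℂ) (i : ℕ) :
    (derivative^[i] q).degree + i ≤ q.degree := by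
  induction i generalizing q with
  | zero => simp
  | succ i ih =>
    calc (derivative^[i+1] q).degree + (i+1 : ℕ)
        = ((derivative^[i] (derivative q)).degree + i) + 1 := by
          rw [Function.iterate_succ_apply]; push_cast; rw [add_assoc]
      _ ≤ (derivative q).degree + 1 := add_le_add_left (ih _) 1
      _ ≤ q.degree := degree_derivative_add_one_le q

lemma act_mdeg_le (a : ℕ → MatPoly N) (ℓ : ℕ) (h : ∀ i ≤ ℓ, mdeg (a i) ≤ (i : WithBot ℕ))
    (p : MatPoly N) : mdeg (act a ℓ p) ≤ mdeg p := by
  rw [mdeg_le_iff]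
  intro r s
  unfold act
  rw [Matrix.sum_apply]
  refine (degree_sum_le _ _).trans (Finset.sup_le fun i hi => ?_)
  rw [Matrix.mul_apply]
  refine (degree_sum_le _ _).trans (Finset.sup_le fun k _ => ?_)
  calc ((matD^[i] p) r k * a i k s).degree
      ≤ (matD^[i] p r k).degree + (a i k s).degree := degree_mul_le _ _
    _ ≤ (matD^[i] p r k).degree + (i : WithBot ℕ) := by
        refine add_le_add_right ?_ _
        exact (degree_le_mdeg (a i) k s).trans (h i (Nat.lt_succ_iff.mp (Finset.mem_range.mp hi)))
    _ = (derivative^[i] (p r k)).degree + (i : WithBot ℕ) := by rw [matD_iter_apply]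
    _ ≤ (p r k).degree := degree_iter_derivative_add_le _ _
    _ ≤ mdeg p := degree_le_mdeg p r k


-- linear independence of descPochhammer
lemma desc_lin_indep (m : ℕ) (c : ℕ → ℂ)
    (h : ∑ i ∈ Finset.range m, C (c i) * descPochhammer ℂ i = 0) :
    ∀ i < m, c i = 0 := by
  induction m with
  | zero => intro i hi; omega
  | succ m ih =>
    rw [Finset.sum_range_succ] at h
    have hdeg : ∀ i < m, (C (c i) * descPochhammer ℂ i).degree < (m : WithBot ℕ) := by
      intro i hi
      refine lt_of_le_of_lt (degree_mul_le _ _) ?_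
      refine lt_of_le_of_lt (add_le_add degree_C_le (degree_le_natDegree)) ?_
      rw [descPochhammer_natDegree, zero_add]
      exact_mod_cast hi
    have hcm : c m = 0 := by
      have h0 : (∑ i ∈ Finset.range m, C (c i) * descPochhammer ℂ i
          + C (c m) * descPochhammer ℂ m).coeff m = 0 := by rw [h]; simp
      rw [Polynomial.coeff_add] at h0
      have h1 : (∑ i ∈ Finset.range m, C (c i) * descPochhammer ℂ i).coeff m = 0 := by
        apply coeff_eq_zero_of_degree_lt
        refine lt_of_le_of_lt (degree_sum_le _ _) ?_
        rw [Finset.sup_lt_iff (by exact_mod_cast WithBot.bot_lt_coe m)]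
        intro i hi
        exact hdeg i (Finset.mem_range.mp hi)
      have h2 : (C (c m) * descPochhammer ℂ m).coeff m = c m := by
        rw [coeff_C_mul]
        have : (descPochhammer ℂ m).coeff m = 1 := by
          have hm := monic_descPochhammer ℂ m
          have := hm.leadingCoeff
          rwa [leadingCoeff, descPochhammer_natDegree] at this
        rw [this, mul_one]
      rw [h1, h2, zero_add] at h0
      exact h0
    have hrest : ∑ i ∈ Finset.range m, C (c i) * descPochhammer ℂ i = 0 := by
      rw [hcm] at h; simpa using h
    intro i hi
    rcases Nat.lt_succ_iff_lt_or_eq.mp hi with h' | h'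
    · exact ih hrest i h'
    · rw [h']; exact hcm

lemma act_coeff_vanish (a : ℕ → MatPoly N) (ℓ : ℕ)
    (h : ∀ p : MatPoly N, mdeg (act a ℓ p) ≤ mdeg p) :
    ∀ i ≤ ℓ, mdeg (a i) ≤ (i : WithBot ℕ) := by
  intro i hi
  rw [mdeg_le_iff]
  intro κ s
  rw [Polynomial.degree_le_iff_coeff_zero]
  intro m hm
  have him : i < m := by exact_mod_cast hm
  -- set d := m - i ≥ 1
  set d := m - i with hd
  have hd1 : 1 ≤ d := by omega
  have hmid : m = i + d := by omega
  -- main claim: for all j ≤ ℓ, coeff of (a j κ s) at j + d vanishes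
  suffices hmain : ∀ j ≤ ℓ, ((a j) κ s).coeff (j + d) = 0 by
    rw [hmid]; exact hmain i hi
  -- the key vanishing of evaluations
  set c : ℕ → ℂ := fun j => ((a j) κ s).coeff (j + d) with hc
  have key : ∀ n : ℕ, ℓ ≤ n →
      ∑ j ∈ Finset.range (ℓ + 1), (n.descFactorial j : ℂ) * c j = 0 := by
    intro n hn
    set p : MatPoly N := Matrix.single κ κ (X ^ n) with hp
    have hpd : mdeg p ≤ (n : WithBot ℕ) := by
      rw [mdeg_le_iff]
      intro r t
      rw [hp, Matrix.single]
      by_cases h1 : κ = r ∧ κ = t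
      · simp only [Matrix.of_apply, if_pos h1]; exact degree_X_pow_le n
      · simp only [Matrix.of_apply, if_neg h1, degree_zero]; exact bot_le
    have hact : mdeg (act a ℓ p) ≤ (n : WithBot ℕ) := (h p).trans hpd
    have hentry : (act a ℓ p) κ s =
        ∑ j ∈ Finset.range (ℓ + 1), (n.descFactorial j : Polynomial ℂ) * (X ^ (n - j) * (a j) κ s) := by
      unfold act
      rw [Matrix.sum_apply]
      refine Finset.sum_congr rfl fun j hj => ?_
      rw [Matrix.mul_apply]
      have hrow : ∀ t : Fin N, (matD^[j] p) κ t * (a j) t s =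
          if t = κ then (n.descFactorial j : Polynomial ℂ) * (X ^ (n - j)) * (a j) κ s else 0 := by
        intro t
        rw [matD_iter_apply, hp]
        by_cases ht : t = κ
        · subst ht
          simp only [Matrix.single_apply_same, if_pos rfl]
          rw [iterate_derivative_X_pow_eq_natCast_mul]
          simp
        · rw [if_neg ht]
          have : Matrix.single κ κ ((X : Polynomial ℂ) ^ n) κ t = 0 := by
            rw [Matrix.single]
            simp only [Matrix.of_apply]
            rw [if_neg (by tauto)]
          rw [this]
          simp
      rw [Finset.sum_congr rfl (fun t _ => hrow t), Finset.sum_ite_eq' Finset.univ κ _]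
      rw [if_pos (Finset.mem_univ κ), mul_assoc]
    have hcoeff : ((act a ℓ p) κ s).coeff (n + d) = 0 := by
      apply coeff_eq_zero_of_degree_lt
      refine lt_of_le_of_lt ((mdeg_le_iff.mp hact) κ s) ?_
      exact_mod_cast (by omega : n < n + d)
    rw [hentry, finset_sum_coeff] at hcoeff
    rw [← hcoeff]
    refine Finset.sum_congr rfl fun j hj => ?_
    have hjl : j ≤ ℓ := Nat.lt_succ_iff.mp (Finset.mem_range.mp hj)
    have hcast : (n.descFactorial j : Polynomial ℂ) = C (n.descFactorial j : ℂ) := by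
      simp
    rw [hcast, coeff_C_mul]
    congr 1
    have : n + d = (j + d) + (n - j) := by omega
    rw [this, Polynomial.coeff_X_pow_mul]
  -- turn into polynomial with infinitely many roots
  set F : Polynomial ℂ := ∑ j ∈ Finset.range (ℓ + 1), C (c j) * descPochhammer ℂ j with hF
  have hFroots : F = 0 := by
    apply Polynomial.eq_zero_of_infinite_isRoot
    apply Set.Infinite.mono (s := (fun n : ℕ => (n : ℂ)) '' Set.Ici ℓ)
    · rintro x ⟨n, hn, rfl⟩
      have := key n hn
      simp only [IsRoot, Set.mem_setOf_eq, hF, eval_finset_sum]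
      rw [← this]
      refine Finset.sum_congr rfl fun j hj => ?_
      rw [eval_mul, eval_C, descPochhammer_eval_eq_descFactorial, mul_comm]
    · exact Set.Infinite.image (fun a _ b _ hab => Nat.cast_injective hab) (Set.Ici_infinite ℓ)
  intro j hj
  exact desc_lin_indep (ℓ + 1) c hFroots j (by omega)

/-! ### Operator algebra helpers -/

lemma matD_sum {ι : Type*} (s : Finset ι) (f : ι → MatPoly N) :
    matD (∑ i ∈ s, f i) = ∑ i ∈ s, matD (f i) := by
  ext r t
  rw [matD_apply, Matrix.sum_apply, Matrix.sum_apply]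
  rw [map_sum derivative (fun i => f i r t) s]
  rfl

lemma matD_iter_sum {ι : Type*} (k : ℕ) (s : Finset ι) (f : ι → MatPoly N) :
    matD^[k] (∑ i ∈ s, f i) = ∑ i ∈ s, matD^[k] (f i) := by
  induction k with
  | zero => simp
  | succ k ih =>
    rw [Function.iterate_succ_apply', ih, matD_sum]
    exact Finset.sum_congr rfl fun i _ => (Function.iterate_succ_apply' _ _ _).symm

lemma iter_derivative_sum {ι : Type*} (k : ℕ) (s : Finset ι) (f : ι → Polynomial ℂ) :
    derivative^[k] (∑ i ∈ s, f i) = ∑ i ∈ s, derivative^[k] (f i) := by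
  induction k with
  | zero => simp
  | succ k ih =>
    rw [Function.iterate_succ_apply', ih, map_sum derivative]
    refine Finset.sum_congr rfl fun i _ => ?_
    rw [Function.iterate_succ_apply']

lemma matD_iter_mul (n : ℕ) (p q : MatPoly N) :
    matD^[n] (p * q) =
      ∑ r ∈ Finset.range (n + 1), n.choose r • (matD^[n - r] p * matD^[r] q) := by
  refine Matrix.ext fun u v => ?_
  rw [matD_iter_apply, Matrix.mul_apply, iter_derivative_sum]
  calc ∑ k, derivative^[n] (p u k * q k v)
      = ∑ k, ∑ r ∈ Finset.range (n + 1),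
          n.choose r • (derivative^[n - r] (p u k) * derivative^[r] (q k v)) := by
        refine Finset.sum_congr rfl fun k _ => ?_
        rw [Polynomial.iterate_derivative_mul]
    _ = ∑ r ∈ Finset.range (n + 1), ∑ k,
          n.choose r • (derivative^[n - r] (p u k) * derivative^[r] (q k v)) :=
        Finset.sum_comm
    _ = (∑ r ∈ Finset.range (n + 1), n.choose r • (matD^[n - r] p * matD^[r] q)) u v := by
        rw [Matrix.sum_apply]
        refine Finset.sum_congr rfl fun r _ => ?_
        rw [Matrix.smul_apply, Matrix.mul_apply, Finset.smul_sum]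
        refine Finset.sum_congr rfl fun k _ => ?_
        rw [matD_iter_apply, matD_iter_apply]

lemma matD_mul (p q : MatPoly N) : matD (p * q) = matD p * q + p * matD q := by
  have h := matD_iter_mul 1 p q
  simpa [Finset.sum_range_succ] using h

lemma act_pad (a : ℕ → MatPoly N) (k K : ℕ) (hK : k ≤ K) (p : MatPoly N) :
    act a k p = ∑ i ∈ Finset.range (K + 1), matD^[i] p * (if i ≤ k then a i else 0) := by
  unfold act
  calc ∑ i ∈ Finset.range (k + 1), matD^[i] p * a i
      = ∑ i ∈ Finset.range (k + 1), matD^[i] p * (if i ≤ k then a i else 0) :=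
        Finset.sum_congr rfl fun i hi => by
          rw [if_pos (Nat.lt_succ_iff.mp (Finset.mem_range.mp hi))]
    _ = ∑ i ∈ Finset.range (K + 1), matD^[i] p * (if i ≤ k then a i else 0) := by
        refine Finset.sum_subset (Finset.range_subset_range.mpr (by omega : k + 1 ≤ K + 1)) ?_
        intro i _ hi
        rw [if_neg (fun h => hi (Finset.mem_range.mpr (by omega))), mul_zero]

lemma mdeg_add_le (x y : MatPoly N) : mdeg (x + y) ≤ mdeg x ⊔ mdeg y := by
  rw [mdeg_le_iff]
  intro i j
  rw [Matrix.add_apply]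
  exact (degree_add_le _ _).trans
    (sup_le_sup (degree_le_mdeg x i j) (degree_le_mdeg y i j))

lemma act_comp (a : ℕ → MatPoly N) (k : ℕ) (b : ℕ → MatPoly N) (m : ℕ) :
    ∃ c : ℕ → MatPoly N, ∀ p, act a k (act b m p) = act c (k + m) p := by
  refine ⟨fun s => ∑ i ∈ Finset.range (k+1), ∑ j ∈ Finset.range (m+1),
      ∑ r ∈ Finset.range (i+1),
      if (i - r) + j = s then i.choose r • (matD^[r] (b j) * a i) else 0, fun p => ?_⟩
  set G : ℕ → ℕ → ℕ → ℕ → MatPoly N := fun i j r s =>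
    if (i - r) + j = s then i.choose r • (matD^[(i - r) + j] p * (matD^[r] (b j) * a i)) else 0
    with hG
  have lhs : act a k (act b m p) =
      ∑ i ∈ Finset.range (k+1), ∑ j ∈ Finset.range (m+1), ∑ r ∈ Finset.range (i+1),
        i.choose r • (matD^[(i - r) + j] p * (matD^[r] (b j) * a i)) := by
    unfold act
    refine Finset.sum_congr rfl fun i _ => ?_
    rw [matD_iter_sum, Finset.sum_mul]
    refine Finset.sum_congr rfl fun j _ => ?_
    rw [matD_iter_mul, Finset.sum_mul]
    refine Finset.sum_congr rfl fun r _ => ?_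
    rw [smul_mul_assoc, mul_assoc, Function.iterate_add_apply]
  rw [lhs]
  unfold act
  have key : ∀ s, matD^[s] p * (∑ i ∈ Finset.range (k+1), ∑ j ∈ Finset.range (m+1),
      ∑ r ∈ Finset.range (i+1),
      if (i - r) + j = s then i.choose r • (matD^[r] (b j) * a i) else 0) =
      ∑ i ∈ Finset.range (k+1), ∑ j ∈ Finset.range (m+1), ∑ r ∈ Finset.range (i+1),
        G i j r s := by
    intro s
    rw [Finset.mul_sum]
    refine Finset.sum_congr rfl fun i _ => ?_
    rw [Finset.mul_sum]
    refine Finset.sum_congr rfl fun j _ => ?_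
    rw [Finset.mul_sum]
    refine Finset.sum_congr rfl fun r _ => ?_
    rw [mul_ite, mul_zero]
    simp only [hG]
    by_cases h : (i - r) + j = s
    · rw [if_pos h, if_pos h, mul_smul_comm, ← h]
    · rw [if_neg h, if_neg h]
  calc ∑ i ∈ Finset.range (k+1), ∑ j ∈ Finset.range (m+1), ∑ r ∈ Finset.range (i+1),
        i.choose r • (matD^[(i - r) + j] p * (matD^[r] (b j) * a i))
      = ∑ i ∈ Finset.range (k+1), ∑ j ∈ Finset.range (m+1), ∑ r ∈ Finset.range (i+1),
          ∑ s ∈ Finset.range (k+m+1), G i j r s := by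
        refine Finset.sum_congr rfl fun i hi => ?_
        refine Finset.sum_congr rfl fun j hj => ?_
        refine Finset.sum_congr rfl fun r hr => ?_
        simp only [hG]
        rw [Finset.sum_ite_eq, if_pos]
        refine Finset.mem_range.mpr ?_
        have h1 := Nat.lt_succ_iff.mp (Finset.mem_range.mp hi)
        have h2 := Nat.lt_succ_iff.mp (Finset.mem_range.mp hj)
        omega
    _ = ∑ i ∈ Finset.range (k+1), ∑ j ∈ Finset.range (m+1), ∑ s ∈ Finset.range (k+m+1),
          ∑ r ∈ Finset.range (i+1), G i j r s := by
        refine Finset.sum_congr rfl fun i _ => Finset.sum_congr rfl fun j _ => ?_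
        exact Finset.sum_comm
    _ = ∑ i ∈ Finset.range (k+1), ∑ s ∈ Finset.range (k+m+1), ∑ j ∈ Finset.range (m+1),
          ∑ r ∈ Finset.range (i+1), G i j r s := by
        refine Finset.sum_congr rfl fun i _ => ?_
        exact Finset.sum_comm
    _ = ∑ s ∈ Finset.range (k+m+1), ∑ i ∈ Finset.range (k+1), ∑ j ∈ Finset.range (m+1),
          ∑ r ∈ Finset.range (i+1), G i j r s := Finset.sum_comm
    _ = ∑ s ∈ Finset.range (k+m+1), matD^[s] p *
          (∑ i ∈ Finset.range (k+1), ∑ j ∈ Finset.range (m+1), ∑ r ∈ Finset.range (i+1),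
            if (i - r) + j = s then i.choose r • (matD^[r] (b j) * a i) else 0) := by
        exact Finset.sum_congr rfl fun s _ => (key s).symm

/-! ### The subalgebra of degree-filtration preserving operators -/

lemma deg_of_act (b : ℕ → MatPoly N) (k : ℕ) (hb : ∀ i ≤ k, mdeg (b i) ≤ (i : WithBot ℕ))
    (T : Module.End ℂ (MatPoly N)) (hT : ∀ p, T p = act b k p) :
    ∀ p : MatPoly N, mdeg (T p) ≤ mdeg p := fun p => by
  rw [hT p]; exact act_mdeg_le b k hb p

/-- The degree-filtration preserving matrix differential operators form a subalgebra. -/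
noncomputable def DFP (N : ℕ) : Subalgebra ℂ (Module.End ℂ (MatPoly N)) where
  carrier := {T | (∃ (k : ℕ) (b : ℕ → MatPoly N), ∀ p, T p = act b k p) ∧
      ∀ p : MatPoly N, mdeg (T p) ≤ mdeg p}
  mul_mem' := by
    rintro T U ⟨⟨k, a, ha⟩, hTd⟩ ⟨⟨m, b, hb⟩, hUd⟩
    constructor
    · obtain ⟨c, hc⟩ := act_comp a k b m
      exact ⟨k + m, c, fun p => by
        rw [Module.End.mul_apply, hb p, ha (act b m p), hc p]⟩
    · intro p
      calc mdeg ((T * U) p) = mdeg (T (U p)) := by rw [Module.End.mul_apply]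
        _ ≤ mdeg (U p) := hTd _
        _ ≤ mdeg p := hUd p
  one_mem' := by
    constructor
    · exact ⟨0, fun _ => 1, fun p => by simp [act, Finset.sum_range_one]⟩
    · intro p; exact le_refl _
  add_mem' := by
    rintro T U ⟨⟨k, a, ha⟩, hTd⟩ ⟨⟨m, b, hb⟩, hUd⟩
    constructor
    · refine ⟨max k m, fun i => (if i ≤ k then a i else 0) + (if i ≤ m then b i else 0),
        fun p => ?_⟩
      have h0 : (T + U) p = act a k p + act b m p := by rw [LinearMap.add_apply, ha, hb]
      rw [h0, act_pad a k (max k m) (le_max_left _ _) p,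
        act_pad b m (max k m) (le_max_right _ _) p, ← Finset.sum_add_distrib]
      unfold act
      refine Finset.sum_congr rfl fun i _ => ?_
      rw [mul_add]
    · intro p
      calc mdeg ((T + U) p) = mdeg (T p + U p) := by rw [LinearMap.add_apply]
        _ ≤ mdeg (T p) ⊔ mdeg (U p) := mdeg_add_le _ _
        _ ≤ mdeg p := sup_le (hTd p) (hUd p)
  zero_mem' := by
    constructor
    · exact ⟨0, fun _ => 0, fun p => by simp [act, Finset.sum_range_one]⟩
    · intro p
      rw [LinearMap.zero_apply, mdeg_le_iff]
      intro i j
      simp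
  algebraMap_mem' := by
    intro c
    constructor
    · refine ⟨0, fun _ => c • 1, fun p => ?_⟩
      rw [Module.algebraMap_end_apply]
      simp [act, Finset.sum_range_one, mul_smul_comm]
    · intro p
      rw [Module.algebraMap_end_apply, mdeg_le_iff]
      intro i j
      rw [Matrix.smul_apply]
      exact (degree_smul_le _ _).trans (degree_le_mdeg p i j)

lemma mdeg_one_le : mdeg (1 : MatPoly N) ≤ (1 : WithBot ℕ) := by
  rw [mdeg_le_iff]
  intro i j
  rw [Matrix.one_apply]
  split
  · exact le_trans degree_one_le (by norm_num)
  · simp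

lemma rmul_const_mem_DFP (M : Mat N) : rmulOp N (M.map Polynomial.C) ∈ DFP N := by
  have hact : ∀ p, rmulOp N (M.map Polynomial.C) p = act (fun _ => M.map Polynomial.C) 0 p := by
    intro p
    simp [act, Finset.sum_range_one, rmulOp, LinearMap.mulRight_apply]
  refine ⟨⟨0, _, hact⟩, deg_of_act _ 0 ?_ _ hact⟩
  intro i _
  rw [mdeg_le_iff]
  intro r s
  rw [Matrix.map_apply]
  have h0i : ((0:ℕ) : WithBot ℕ) ≤ (i : WithBot ℕ) := by exact_mod_cast Nat.zero_le i
  exact le_trans degree_C_le (by exact_mod_cast h0i)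

lemma DOp_mem_DFP : DOp N ∈ DFP N := by
  have hact : ∀ p, DOp N p = act (fun i => if i = 1 then 1 else 0) 1 p := by
    intro p
    simp [act, Finset.sum_range_succ, Finset.sum_range_one, DOp]
  refine ⟨⟨1, _, hact⟩, deg_of_act _ 1 ?_ _ hact⟩
  intro i hi
  by_cases h : i = 1
  · subst h
    simpa using mdeg_one_le
  · rw [mdeg_le_iff]
    intro r s
    simp [h]

lemma SOp_mem_DFP : SOp N ∈ DFP N := by
  have hact : ∀ p, SOp N p = act (fun i => if i = 1 then scalarM N Polynomial.X else 0) 1 p := by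
    intro p
    simp [act, Finset.sum_range_succ, Finset.sum_range_one, SOp, DOp, rmulOp,
      LinearMap.mulRight_apply]
  refine ⟨⟨1, _, hact⟩, deg_of_act _ 1 ?_ _ hact⟩
  intro i hi
  by_cases h : i = 1
  · subst h
    have hX : mdeg (scalarM N Polynomial.X) ≤ (1 : WithBot ℕ) := by
      rw [mdeg_le_iff]
      intro r s
      rw [scalarM, Matrix.diagonal_apply]
      split
      · exact degree_X_le
      · simp
    simpa using hX
  · rw [mdeg_le_iff]
    intro r s
    simp [h]

/-! ### Membership in the adjoin -/

lemma DOp_pow_apply (i : ℕ) (p : MatPoly N) : ((DOp N)^i) p = matD^[i] p := by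
  rw [Module.End.pow_apply]
  rfl

noncomputable def Wop (N : ℕ) (n i : ℕ) : Module.End ℂ (MatPoly N) :=
  (rmulOp N (scalarM N (Polynomial.X ^ n))).comp ((DOp N)^i)

lemma Wop_apply (n i : ℕ) (p : MatPoly N) :
    Wop N n i p = matD^[i] p * scalarM N (Polynomial.X ^ n) := by
  simp [Wop, rmulOp, LinearMap.mulRight_apply, DOp_pow_apply]

lemma matD_scalarM (q : Polynomial ℂ) : matD (scalarM N q) = scalarM N (derivative q) := by
  refine Matrix.ext fun r s => ?_
  rw [matD_apply, scalarM, scalarM, Matrix.diagonal_apply, Matrix.diagonal_apply]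
  split
  · rfl
  · simp

lemma scalarM_mul (q r : Polynomial ℂ) : scalarM N (q * r) = scalarM N q * scalarM N r := by
  rw [scalarM, scalarM, scalarM, Matrix.diagonal_mul_diagonal]

lemma scalarM_smul (c : ℂ) (q : Polynomial ℂ) : scalarM N (c • q) = c • scalarM N q := by
  refine Matrix.ext fun r s => ?_
  rw [scalarM, scalarM, Matrix.smul_apply, Matrix.diagonal_apply, Matrix.diagonal_apply]
  split
  · rfl
  · simp

noncomputable abbrev genAlg (N : ℕ) : Subalgebra ℂ (Module.End ℂ (MatPoly N)) :=
  Algebra.adjoin ℂ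
    (Set.range (fun M : Mat N => rmulOp N (M.map Polynomial.C)) ∪ {DOp N, SOp N})

lemma DOp_mem_genAlg : DOp N ∈ genAlg N :=
  Algebra.subset_adjoin (Or.inr (Set.mem_insert _ _))

lemma SOp_mem_genAlg : SOp N ∈ genAlg N :=
  Algebra.subset_adjoin (Or.inr (Set.mem_insert_of_mem _ rfl))

lemma Wop_mem_genAlg : ∀ n i : ℕ, n ≤ i → Wop N n i ∈ genAlg N := by
  intro n
  induction n with
  | zero =>
    intro i _
    have h0 : Wop N 0 i = (DOp N)^i := by
      apply LinearMap.ext; intro p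
      rw [Wop_apply, DOp_pow_apply, pow_zero]
      have : scalarM N (1 : Polynomial ℂ) = 1 := Matrix.diagonal_one
      rw [this, mul_one]
    rw [h0]
    exact pow_mem DOp_mem_genAlg i
  | succ n ih =>
    intro i hi
    rcases i with _ | j
    · omega
    have hnj : n ≤ j := by omega
    have hscal : (Polynomial.C (n:ℂ) * Polynomial.X ^ (n - 1)) * Polynomial.X
        = (n:ℂ) • (Polynomial.X ^ n : Polynomial ℂ) := by
      rcases n with _ | m
      · simp
      · rw [mul_assoc, ← pow_succ]
        simp [Polynomial.smul_eq_C_mul]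
    have hid : Wop N (n+1) (j+1) = SOp N * Wop N n j - (n : ℂ) • Wop N n j := by
      apply LinearMap.ext; intro p
      simp only [LinearMap.sub_apply, LinearMap.smul_apply, Module.End.mul_apply, Wop_apply]
      have hSapp : ∀ q : MatPoly N, SOp N q = matD q * scalarM N Polynomial.X := fun q => rfl
      rw [hSapp, matD_mul, matD_scalarM, Polynomial.derivative_X_pow, add_mul,
        mul_assoc, mul_assoc, ← scalarM_mul, ← scalarM_mul, hscal, scalarM_smul,
        mul_smul_comm]
      rw [add_sub_cancel_right, ← pow_succ, ← Function.iterate_succ_apply' matD j p]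
    rw [hid]
    exact sub_mem (mul_mem SOp_mem_genAlg (ih j hnj)) (Subalgebra.smul_mem _ (ih j hnj) _)

lemma matpoly_decomp (A : MatPoly N) (i : ℕ) (hA : mdeg A ≤ (i : WithBot ℕ)) :
    A = ∑ n ∈ Finset.range (i+1), scalarM N (Polynomial.X ^ n) * (coeffMat A n).map Polynomial.C := by
  refine Matrix.ext fun r s => ?_
  rw [Matrix.sum_apply]
  have hterm : ∀ n, (scalarM N (Polynomial.X ^ n) * (coeffMat A n).map Polynomial.C) r s
      = Polynomial.monomial n ((A r s).coeff n) := by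
    intro n
    rw [scalarM, Matrix.diagonal_mul, Matrix.map_apply]
    rw [Polynomial.X_pow_mul, Polynomial.C_mul_X_pow_eq_monomial]
    rfl
  rw [Finset.sum_congr rfl fun n _ => hterm n]
  refine Polynomial.as_sum_range' _ _ ?_
  have := (mdeg_le_iff.mp hA) r s
  exact Nat.lt_succ_of_le (Polynomial.natDegree_le_iff_degree_le.mpr this)

lemma mem_genAlg_of (T : Module.End ℂ (MatPoly N)) (k : ℕ) (b : ℕ → MatPoly N)
    (hb : ∀ p, T p = act b k p) (hdeg : ∀ p : MatPoly N, mdeg (T p) ≤ mdeg p) :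
    T ∈ genAlg N := by
  have hbdeg : ∀ i ≤ k, mdeg (b i) ≤ (i : WithBot ℕ) :=
    act_coeff_vanish b k (fun p => by rw [← hb p]; exact hdeg p)
  have hTeq : T = ∑ i ∈ Finset.range (k+1), ∑ n ∈ Finset.range (i+1),
      rmulOp N ((coeffMat (b i) n).map Polynomial.C) * Wop N n i := by
    apply LinearMap.ext; intro p
    rw [hb p]
    unfold act
    rw [LinearMap.sum_apply]
    refine Finset.sum_congr rfl fun i hi => ?_
    rw [LinearMap.sum_apply]
    have hdecomp := matpoly_decomp (b i) i (hbdeg i (Nat.lt_succ_iff.mp (Finset.mem_range.mp hi)))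
    calc matD^[i] p * b i
        = ∑ n ∈ Finset.range (i+1),
            matD^[i] p * (scalarM N (Polynomial.X ^ n) * (coeffMat (b i) n).map Polynomial.C) := by
          rw [← Finset.mul_sum, ← hdecomp]
      _ = ∑ n ∈ Finset.range (i+1),
            (rmulOp N ((coeffMat (b i) n).map Polynomial.C) * Wop N n i) p := by
          refine Finset.sum_congr rfl fun n _ => ?_
          rw [Module.End.mul_apply, Wop_apply]
          simp [rmulOp, LinearMap.mulRight_apply, mul_assoc]
  rw [hTeq]
  refine sum_mem fun i hi => sum_mem fun n hn => ?_
  refine mul_mem (Algebra.subset_adjoin (Or.inl ⟨_, rfl⟩)) ?_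
  exact Wop_mem_genAlg n i (Nat.lt_succ_iff.mp (Finset.mem_range.mp hn))

end Helper

/-- **Characterization of degree-filtration preserving operators.**  A matrix
differential operator `T(p) = ∑ p⁽ⁱ⁾ aᵢ` satisfies `deg T(p) ≤ deg p` for all `p` iff
`deg aᵢ ≤ i` for all `i ≤ ℓ`; and the degree-filtration preserving matrix differential
operators with polynomial coefficients are exactly the subalgebra of endomorphisms
generated by right multiplications by constant matrices together with `∂` and
`s = ∂x`. -/
theorem degree_filtration_preserving_characterization (N : ℕ) :
    (∀ (ℓ : ℕ) (a : ℕ → MatPoly N),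
      (∀ p : MatPoly N, mdeg (act a ℓ p) ≤ mdeg p) ↔
        ∀ i ≤ ℓ, mdeg (a i) ≤ (i : WithBot ℕ)) ∧
    {T : Module.End ℂ (MatPoly N) |
        (∃ (k : ℕ) (b : ℕ → MatPoly N), ∀ p, T p = act b k p) ∧
        ∀ p : MatPoly N, mdeg (T p) ≤ mdeg p}
      = ↑(Algebra.adjoin ℂ
          (Set.range (fun M : Mat N => rmulOp N (M.map Polynomial.C))
            ∪ {DOp N, SOp N})) := by
  constructor
  · intro ℓ a
    exact ⟨Helper.act_coeff_vanish a ℓ, fun h => Helper.act_mdeg_le a ℓ h⟩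
  · apply Set.Subset.antisymm
    · rintro T ⟨⟨k, b, hb⟩, hdeg⟩
      exact SetLike.mem_coe.mpr (Helper.mem_genAlg_of T k b hb hdeg)
    · intro T hT
      have hle : Algebra.adjoin ℂ
          (Set.range (fun M : Mat N => rmulOp N (M.map Polynomial.C)) ∪ {DOp N, SOp N})
          ≤ Helper.DFP N := by
        apply Algebra.adjoin_le
        rintro U (⟨M, rfl⟩ | hU)
        · exact Helper.rmul_const_mem_DFP M
        · rcases hU with rfl | hU
          · exact Helper.DOp_mem_DFP
          · rw [Set.mem_singleton_iff] at hU
            subst hU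
            exact Helper.SOp_mem_DFP
      exact hle hT
end

section
/- (Operators in D(w) are degree-filtration preserving with polynomial eigenvalues.) Let w be a weight matrix with sequence of monic orthogonal matrix polynomials p(x,n), and let δ = ∑_{i=0}^ℓ ∂ⁱ aᵢ(x) ∈ D(w). Then: (i) δ is degree-filtration preserving, i.e., deg(q·δ) ≤ deg(q) for every matrix polynomial q, and deg(aᵢ) ≤ i for every i; and (ii) there exists a matrix-valued polynomial Λ ∈ M_N(ℂ[n]) such that p(x,n)·δ = Λ(n) p(x,n) for all integers n ≥ 0; explicitly, Λ(n) is the coefficient of xⁿ in (xⁿI)·δ. -/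
open MeasureTheory Polynomial Matrix Set Filter Topology
open scoped ComplexOrder

namespace DWaux

/-- The transferred operator on `(Mat N)[X]`. -/
noncomputable def dop {N : ℕ} (A : ℕ → Polynomial (Mat N)) (ℓ : ℕ)
    (p : Polynomial (Mat N)) : Polynomial (Mat N) :=
  ∑ i ∈ Finset.range (ℓ + 1), Polynomial.derivative^[i] p * A i

lemma coeffMat_eq {N : ℕ} (p : MatPoly N) (n : ℕ) :
    coeffMat p n = (matPolyEquiv p).coeff n := by
  ext i j
  rw [matPolyEquiv_coeff_apply]; rfl

lemma matPolyEquiv_matD {N : ℕ} (p : MatPoly N) :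
    matPolyEquiv (matD p) = derivative (matPolyEquiv p) := by
  ext k i j
  rw [matPolyEquiv_coeff_apply]
  simp only [matD, Matrix.map_apply, coeff_derivative, matPolyEquiv_coeff_apply]
  have : ((k : Mat N) + 1) = Matrix.diagonal (fun _ => ((k : ℂ) + 1)) := by
    rw [← Matrix.diagonal_natCast, ← Matrix.diagonal_one, Matrix.diagonal_add]
  rw [this, Matrix.mul_diagonal, matPolyEquiv_coeff_apply]

lemma matPolyEquiv_iter_matD {N : ℕ} (i : ℕ) (p : MatPoly N) :
    matPolyEquiv (matD^[i] p) = derivative^[i] (matPolyEquiv p) := by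
  induction i generalizing p with
  | zero => rfl
  | succ i ih =>
    rw [Function.iterate_succ_apply, Function.iterate_succ_apply, ih, matPolyEquiv_matD]

lemma matPolyEquiv_act {N : ℕ} (a : ℕ → MatPoly N) (ℓ : ℕ) (p : MatPoly N) :
    matPolyEquiv (act a ℓ p) = dop (fun i => matPolyEquiv (a i)) ℓ (matPolyEquiv p) := by
  rw [act, dop, map_sum]
  refine Finset.sum_congr rfl fun i _ => ?_
  rw [_root_.map_mul, matPolyEquiv_iter_matD]

lemma matPolyEquiv_csmul {N : ℕ} (Λ : Mat N) (p : MatPoly N) :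
    matPolyEquiv (csmul Λ p) = C Λ * matPolyEquiv p := by
  rw [csmul, _root_.map_mul, matPolyEquiv_map_C]

lemma matPolyEquiv_scalarM_pow {N : ℕ} (n : ℕ) :
    matPolyEquiv (scalarM N (X ^ n)) = (X : Polynomial (Mat N)) ^ n := by
  have : scalarM N (X ^ n) = (Matrix.diagonal fun _ : Fin N => (X : Polynomial ℂ)) ^ n := by
    rw [Matrix.diagonal_pow]; rfl
  rw [this, map_pow, matPolyEquiv_diagonal_X]

lemma mdeg_eq {N : ℕ} (p : MatPoly N) : mdeg p = (matPolyEquiv p).degree := by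
  apply le_antisymm
  · apply Finset.sup_le
    intro ij _
    rw [degree_le_iff_coeff_zero]
    intro m hm
    have := coeff_eq_zero_of_degree_lt hm
    have h2 := congrFun (congrFun this ij.1) ij.2
    rw [matPolyEquiv_coeff_apply] at h2
    simpa using h2
  · rw [degree_le_iff_coeff_zero]
    intro m hm
    ext i j
    rw [matPolyEquiv_coeff_apply]
    have hd : (p i j).degree ≤ mdeg p := Finset.le_sup (f := fun ij : Fin N × Fin N => (p ij.1 ij.2).degree) (Finset.mem_univ (i, j))
    exact coeff_eq_zero_of_degree_lt (lt_of_le_of_lt hd hm)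

lemma dop_coeff {N : ℕ} (A : ℕ → Polynomial (Mat N)) (ℓ : ℕ) (p : Polynomial (Mat N)) (m : ℕ) :
    (dop A ℓ p).coeff m = ∑ i ∈ Finset.range (ℓ + 1), ∑ j ∈ Finset.range (m + 1),
      (j + i).descFactorial i • p.coeff (j + i) * (A i).coeff (m - j) := by
  rw [dop, finset_sum_coeff]
  refine Finset.sum_congr rfl fun i _ => ?_
  rw [coeff_mul, Finset.Nat.sum_antidiagonal_eq_sum_range_succ_mk]
  refine Finset.sum_congr rfl fun j _ => ?_
  rw [coeff_iterate_derivative]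

lemma dop_coeff_eq_zero {N : ℕ} {A : ℕ → Polynomial (Mat N)} {ℓ : ℕ}
    (hA : ∀ i ≤ ℓ, ∀ u, i < u → (A i).coeff u = 0)
    {p : Polynomial (Mat N)} {t : ℕ} (hp : ∀ m, t ≤ m → p.coeff m = 0)
    {m : ℕ} (hm : t ≤ m) : (dop A ℓ p).coeff m = 0 := by
  rw [dop_coeff]
  refine Finset.sum_eq_zero fun i hi => Finset.sum_eq_zero fun j hj => ?_
  rw [Finset.mem_range] at hi hj
  rcases le_or_gt (m - j) i with h | h
  · rw [hp (j + i) (by omega), smul_zero, zero_mul]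
  · rw [hA i (by omega) _ h, mul_zero]

lemma dop_degree_le {N : ℕ} {A : ℕ → Polynomial (Mat N)} {ℓ : ℕ}
    (hA : ∀ i ≤ ℓ, ∀ u, i < u → (A i).coeff u = 0) (p : Polynomial (Mat N)) :
    (dop A ℓ p).degree ≤ p.degree := by
  rw [degree_le_iff_coeff_zero]
  intro m hm
  rw [dop_coeff]
  refine Finset.sum_eq_zero fun i hi => Finset.sum_eq_zero fun j hj => ?_
  rw [Finset.mem_range] at hi hj
  rcases le_or_gt (m - j) i with h | h
  · have hmle : m ≤ j + i := by omega
    have hji : p.degree < ((j + i : ℕ) : WithBot ℕ) :=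
      lt_of_lt_of_le hm (Nat.cast_le.mpr hmle)
    rw [coeff_eq_zero_of_degree_lt hji, smul_zero, zero_mul]
  · rw [hA i (by omega) _ h, mul_zero]

lemma key_lemma {N : ℕ} {A : ℕ → Polynomial (Mat N)} {ℓ : ℕ} {Q : ℕ → Polynomial (Mat N)}
    (hQd : ∀ n m, n < m → (Q n).coeff m = 0) (hQm : ∀ n, (Q n).coeff n = 1)
    (heig : ∀ n, ∃ Λ : Mat N, dop A ℓ (Q n) = C Λ * Q n) :
    ∀ i ≤ ℓ, ∀ u, i < u → (A i).coeff u = 0 := by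
  set K := (Finset.range (ℓ + 1)).sup (fun i => (A i).natDegree) with hK
  have main : ∀ d k, 1 ≤ k → K + 1 ≤ k + d → ∀ n ≤ ℓ, (A n).coeff (n + k) = 0 := by
    intro d
    induction d with
    | zero =>
      intro k hk hKk n hn
      apply coeff_eq_zero_of_natDegree_lt
      have : (A n).natDegree ≤ K :=
        Finset.le_sup (f := fun i => (A i).natDegree) (Finset.mem_range.mpr (by omega))
      omega
    | succ d ih =>
      intro k hk hKk
      have outer : ∀ i ≤ ℓ, ∀ u, i + k < u → (A i).coeff u = 0 := by
        intro i hi u hu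
        have h1 := ih (u - i) (by omega) (by omega) i hi
        have e : i + (u - i) = u := by omega
        rwa [e] at h1
      intro n
      induction n using Nat.strong_induction_on with
      | _ n ihn =>
        intro hn
        obtain ⟨Λ, hΛ⟩ := heig n
        have hc := congrArg (fun q => q.coeff (n + k)) hΛ
        simp only [coeff_C_mul] at hc
        rw [dop_coeff, hQd n (n + k) (by omega), mul_zero] at hc
        -- all terms except (i,j) = (n,0) vanish
        have hterm : ∀ i ∈ Finset.range (ℓ + 1), ∀ j ∈ Finset.range (n + k + 1),
            ¬(i = n ∧ j = 0) →
            (j + i).descFactorial i • (Q n).coeff (j + i) * (A i).coeff (n + k - j) = 0 := by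
          intro i hi j hj hne
          rw [Finset.mem_range] at hi hj
          rcases lt_or_ge n (j + i) with h | h
          · rw [hQd n (j + i) h, smul_zero, zero_mul]
          · rcases lt_or_ge (j + i) n with h2 | h2
            · rw [outer i (by omega) (n + k - j) (by omega), mul_zero]
            · -- j + i = n
              have hji : j + i = n := le_antisymm h h2
              have hin : i < n := by
                rcases Nat.lt_or_ge i n with h3 | h3
                · exact h3
                · exfalso; exact hne ⟨by omega, by omega⟩
              have := ihn i hin (by omega)
              have e : n + k - j = i + k := by omega
              rw [e, this, mul_zero]
        rw [Finset.sum_eq_single_of_mem n (Finset.mem_range.mpr (by omega))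
          (fun b hb hbn => Finset.sum_eq_zero fun j hj =>
            hterm b hb j hj (fun hc => hbn hc.1))] at hc
        rw [Finset.sum_eq_single_of_mem 0 (Finset.mem_range.mpr (by omega))
          (fun j hj hj0 => hterm n (Finset.mem_range.mpr (by omega)) j hj
            (fun hc => hj0 hc.2))] at hc
        rw [zero_add, Nat.sub_zero, hQm n, Nat.descFactorial_self, smul_mul_assoc, one_mul] at hc
        rw [← Nat.cast_smul_eq_nsmul ℂ] at hc
        rcases smul_eq_zero.mp hc with h | h
        · exact absurd h (Nat.cast_ne_zero.mpr n.factorial_ne_zero)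
        · exact h
  intro i hi u hu
  have h1 := main (K + 1) (u - i) (by omega) (by omega) i hi
  have e : i + (u - i) = u := by omega
  rwa [e] at h1

lemma iter_deriv_X_pow {R : Type*} [Semiring R] (n k : ℕ) :
    derivative^[k] ((X : R[X]) ^ n) = n.descFactorial k • (X : R[X]) ^ (n - k) := by
  ext m
  rw [coeff_iterate_derivative, coeff_smul, coeff_X_pow, coeff_X_pow]
  rcases eq_or_ne (m + k) n with h | h
  · rw [if_pos h, if_pos (by omega), ← h]
  · rw [if_neg h]
    by_cases h2 : m = n - k
    · have hnk : n < k := by omega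
      rw [if_pos h2, smul_zero, Nat.descFactorial_eq_zero_iff_lt.mpr hnk, zero_smul]
    · rw [if_neg h2, smul_zero, smul_zero]

lemma dop_Xpow_coeff {N : ℕ} (A : ℕ → Polynomial (Mat N)) (ℓ n : ℕ) :
    (dop A ℓ ((X : Polynomial (Mat N)) ^ n)).coeff n
      = ∑ i ∈ Finset.range (ℓ + 1), n.descFactorial i • (A i).coeff i := by
  rw [dop, finset_sum_coeff]
  refine Finset.sum_congr rfl fun i _ => ?_
  rcases le_or_gt i n with h | h
  · rw [iter_deriv_X_pow, smul_mul_assoc, coeff_smul, coeff_X_pow_mul',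
      if_pos (Nat.sub_le n i)]
    congr 2
    omega
  · rw [iter_deriv_X_pow, Nat.descFactorial_eq_zero_iff_lt.mpr h, zero_smul, zero_mul,
      coeff_zero, zero_smul]

end DWaux

open DWaux in
/-- **Operators in `D(w)` are degree-filtration preserving with polynomial
eigenvalues.**  If `δ = ∑ ∂ⁱaᵢ ∈ D(w)` then `δ` is degree-filtration preserving with
`deg aᵢ ≤ i`, and there is a matrix-valued polynomial `Λ ∈ M_N(ℂ[n])` with
`p(x,n)·δ = Λ(n)p(x,n)` for all `n`; explicitly, `Λ(n)` is the coefficient of `xⁿ`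
in `(xⁿI)·δ`. -/
theorem DW_degree_filtration_preserving {N : ℕ} {x₀ x₁ : ℝ}
    (w : ℝ → Mat N) (hw : IsWeightMatrix w x₀ x₁)
    (P : ℕ → MatPoly N) (hP : IsMonicOMP w P)
    (ℓ : ℕ) (a : ℕ → MatPoly N)
    (heig : ∀ n, ∃ Λ : Mat N, act a ℓ (P n) = csmul Λ (P n)) :
    -- (i) δ is degree-filtration preserving, and deg aᵢ ≤ i:
    (∀ q : MatPoly N, mdeg (act a ℓ q) ≤ mdeg q) ∧
    (∀ i ≤ ℓ, mdeg (a i) ≤ (i : WithBot ℕ)) ∧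
    -- (ii) the eigenvalues are given by a matrix polynomial in n, namely the coefficient
    -- of xⁿ in (xⁿI)·δ:
    (∃ L : Matrix (Fin N) (Fin N) (Polynomial ℂ), ∀ n : ℕ,
      L.map (fun q => q.eval ((n : ℂ)))
        = coeffMat (act a ℓ (scalarM N (Polynomial.X ^ n))) n) ∧
    (∀ n : ℕ,
      act a ℓ (P n)
        = csmul (coeffMat (act a ℓ (scalarM N (Polynomial.X ^ n))) n) (P n)) := by
  classical
  set A : ℕ → Polynomial (Mat N) := fun i => matPolyEquiv (a i) with hAdef
  have hQd : ∀ n m, n < m → (matPolyEquiv (P n)).coeff m = 0 := by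
    intro n m hnm
    ext i j
    rw [matPolyEquiv_coeff_apply]
    simp only [Matrix.zero_apply]
    exact coeff_eq_zero_of_natDegree_lt (lt_of_le_of_lt (hP.degle n i j) hnm)
  have hQm : ∀ n, (matPolyEquiv (P n)).coeff n = 1 := by
    intro n
    rw [← coeffMat_eq]
    exact hP.monic n
  have heig' : ∀ n, ∃ Λ : Mat N,
      dop A ℓ (matPolyEquiv (P n)) = Polynomial.C Λ * matPolyEquiv (P n) := by
    intro n
    obtain ⟨Λ, h⟩ := heig n
    exact ⟨Λ, by rw [← matPolyEquiv_act, h, matPolyEquiv_csmul]⟩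
  have hA : ∀ i ≤ ℓ, ∀ u, i < u → (A i).coeff u = 0 := key_lemma hQd hQm heig'
  have hcoeff : ∀ n : ℕ, coeffMat (act a ℓ (scalarM N (Polynomial.X ^ n))) n
      = (dop A ℓ ((Polynomial.X : Polynomial (Mat N)) ^ n)).coeff n := by
    intro n
    rw [coeffMat_eq, matPolyEquiv_act, matPolyEquiv_scalarM_pow]
  have part4 : ∀ n : ℕ, act a ℓ (P n)
      = csmul (coeffMat (act a ℓ (scalarM N (Polynomial.X ^ n))) n) (P n) := by
    intro n
    obtain ⟨Λ, h⟩ := heig n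
    have h' : dop A ℓ (matPolyEquiv (P n)) = Polynomial.C Λ * matPolyEquiv (P n) := by
      rw [← matPolyEquiv_act, h, matPolyEquiv_csmul]
    have hdc : (dop A ℓ (matPolyEquiv (P n))).coeff n
        = (dop A ℓ ((Polynomial.X : Polynomial (Mat N)) ^ n)).coeff n := by
      rw [dop_coeff, dop_coeff]
      refine Finset.sum_congr rfl fun i hi => Finset.sum_congr rfl fun j hj => ?_
      rw [Finset.mem_range] at hi hj
      rcases lt_or_ge (j + i) n with h2 | h2
      · rw [hA i (by omega) (n - j) (by omega), mul_zero, mul_zero]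
      · rcases eq_or_lt_of_le h2 with h3 | h3
        · rw [← h3, hQm n, coeff_X_pow, if_pos rfl]
        · rw [hQd n (j + i) h3, coeff_X_pow, if_neg (by omega)]
    have hΛeq : Λ = coeffMat (act a ℓ (scalarM N (Polynomial.X ^ n))) n := by
      have hc := congrArg (fun q => q.coeff n) h'
      simp only [coeff_C_mul, hQm n, mul_one] at hc
      rw [hcoeff n, ← hdc, hc]
    rw [← hΛeq]
    exact h
  refine ⟨?_, ?_, ?_, part4⟩
  · intro q
    rw [mdeg_eq, mdeg_eq, matPolyEquiv_act]
    exact dop_degree_le hA (matPolyEquiv q)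
  · intro i hi
    rw [mdeg_eq, degree_le_iff_coeff_zero]
    intro m hm
    exact hA i hi m (by exact_mod_cast hm)
  · refine ⟨∑ i ∈ Finset.range (ℓ + 1),
      (coeffMat (a i) i).map (fun c => Polynomial.C c * descPochhammer ℂ i), ?_⟩
    intro n
    rw [hcoeff n, dop_Xpow_coeff]
    ext r s
    simp only [Matrix.map_apply, Matrix.sum_apply, Polynomial.eval_finset_sum,
      Polynomial.eval_mul, Polynomial.eval_C, descPochhammer_eval_eq_descFactorial,
      Matrix.smul_apply]
    refine Finset.sum_congr rfl fun i _ => ?_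
    have h1 : (A i).coeff i r s = coeffMat (a i) i r s := by
      rw [coeffMat_eq]
    rw [h1, nsmul_eq_mul, mul_comm]
end

section
/- (Left-division criterion via kernels.) Let μ and δ be matrix differential operators with coefficients in M_N(ℂ[[x]]), and suppose there exists a matrix differential operator ν with coefficients in M_N(ℂ[[x]]) such that νμ is monic. Then there exists a matrix differential operator η with coefficients in M_N(ℂ[[x]]) such that δ = μη (as operators acting on M_N(ℂ[[x]])) if and only if ker(μ) ⊆ ker(δ). -/
/-!
Let `e = νμ`, monic of order `m`. Comparing coefficients, `ψ·e = h` can be solved for any `h`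
with the first `m` coefficients of `ψ` prescribed at will. Hence `e` is surjective, and an
operator of order `< m` that kills `ker e` is zero. Euclidean division by the monic `e` then
shows that every operator killing `ker e` factors as `p ↦ (p·e)·η`. If `ker μ ⊆ ker δ`, this
applies to `p ↦ (p·ν)·δ`; writing `f·μ = g·e = (g·ν)·μ` gives `f - g·ν ∈ ker δ`, so
`f·δ = (g·ν)·δ = (g·e)·η = (f·μ)·η`.
-/

open Matrix PowerSeries

/-- `N×N` matrices of formal power series. -/
abbrev MatPS (N : ℕ) := Matrix (Fin N) (Fin N) (PowerSeries ℂ)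

/-- Entrywise formal differentiation of a matrix of power series. -/
noncomputable def psmatD {N : ℕ} (f : MatPS N) : MatPS N :=
  f.map fun g => PowerSeries.derivativeFun g

/-- Right action of the matrix differential operator `∑ ∂ⁱ aᵢ` (orders `0,…,r`) with
power-series coefficients on a matrix of power series: `f ↦ ∑ f⁽ⁱ⁾ aᵢ`. -/
noncomputable def actPS {N : ℕ} (a : ℕ → MatPS N) (r : ℕ) (f : MatPS N) : MatPS N :=
  ∑ i ∈ Finset.range (r + 1), (psmatD)^[i] f * a i

/-- Embed a constant matrix into matrices of power series. -/
noncomputable def constPS {N : ℕ} (c : Mat N) : MatPS N :=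
  c.map fun z => PowerSeries.C z

open Finset

section DifferentialOperators

variable {N : ℕ}

noncomputable def psmatDHom : MatPS N →+ MatPS N :=
  (derivative ℂ : ℂ⟦X⟧ →ₗ[ℂ] ℂ⟦X⟧).toAddMonoidHom.mapMatrix

theorem coe_psmatDHom : ⇑(psmatDHom : MatPS N →+ MatPS N) = psmatD := rfl

theorem psmatD_apply (f : MatPS N) (i j : Fin N) : psmatD f i j = derivative ℂ (f i j) := rfl

theorem psmatD_mul (f g : MatPS N) : psmatD (f * g) = psmatD f * g + f * psmatD g := by
  ext i j : 1
  simp only [psmatD_apply, Matrix.add_apply, Matrix.mul_apply, map_sum, Derivation.leibniz,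
    smul_eq_mul, sum_add_distrib]
  rw [add_comm]
  congr 1
  exact sum_congr rfl fun _ _ => mul_comm _ _

theorem psmatD_sum {ι : Type*} (s : Finset ι) (f : ι → MatPS N) :
    psmatD (∑ i ∈ s, f i) = ∑ i ∈ s, psmatD (f i) :=
  map_sum psmatDHom f s

theorem actPS_zero (a : ℕ → MatPS N) (r : ℕ) : actPS a r 0 = 0 := by
  simp [actPS, ← coe_psmatDHom, iterate_map_zero]

theorem actPS_sub (a : ℕ → MatPS N) (r : ℕ) (f g : MatPS N) :
    actPS a r (f - g) = actPS a r f - actPS a r g := by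
  simp [actPS, ← coe_psmatDHom, iterate_map_sub, sub_mul]

theorem actPS_succ (g : ℕ → MatPS N) (u : ℕ) (f : MatPS N) :
    actPS g (u + 1) f = actPS g u f + psmatD^[u + 1] f * g (u + 1) :=
  sum_range_succ _ _

theorem actPS_eq_of_le (g : ℕ → MatPS N) {u U : ℕ} (hU : u ≤ U) (f : MatPS N) :
    actPS g u f = actPS (fun n => if n ≤ u then g n else 0) U f := by
  rw [actPS, actPS, ← sum_subset (range_subset_range.mpr (by omega : u + 1 ≤ U + 1))]
  · exact sum_congr rfl fun n hn => by rw [if_pos (Nat.lt_succ_iff.mp (mem_range.mp hn))]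
  · intro n _ hn
    rw [if_neg (by simpa [Nat.lt_succ_iff] using hn), mul_zero]

theorem actPS_add_coeff (A B : ℕ → MatPS N) (u : ℕ) (f : MatPS N) :
    actPS (A + B) u f = actPS A u f + actPS B u f := by
  simp only [actPS, Pi.add_apply, mul_add, sum_add_distrib]

theorem actPS_mul_right (g : ℕ → MatPS N) (u : ℕ) (f M : MatPS N) :
    actPS g u f * M = actPS (fun n => g n * M) u f := by
  simp only [actPS, sum_mul, mul_assoc]

theorem actPS_single (g : MatPS N) {j u : ℕ} (hj : j ≤ u) (f : MatPS N) :
    actPS (Pi.single j g) u f = psmatD^[j] f * g := by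
  rw [actPS, sum_eq_single_of_mem j (mem_range.mpr (by omega))
    fun n _ hn => by rw [Pi.single_eq_of_ne hn, mul_zero], Pi.single_eq_same]

theorem psmatD_actPS (c : ℕ → MatPS N) (t : ℕ) :
    ∃ h : ℕ → MatPS N, (∀ f, psmatD (actPS c t f) = actPS h (t + 1) f) ∧ h (t + 1) = c t := by
  refine ⟨(fun | 0 => 0 | n + 1 => c n) + fun n => if n ≤ t then psmatD (c n) else 0,
    fun f => ?_, by simp⟩
  rw [actPS_add_coeff, ← actPS_eq_of_le _ t.le_succ, actPS, actPS, actPS,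
    sum_range_succ' _ (t + 1)]
  simp only [psmatD_sum, psmatD_mul, sum_add_distrib, ← Function.iterate_succ_apply' psmatD]
  simp

theorem iterate_psmatD_actPS (c : ℕ → MatPS N) (t k : ℕ) :
    ∃ h : ℕ → MatPS N, (∀ f, psmatD^[k] (actPS c t f) = actPS h (t + k) f) ∧ h (t + k) = c t := by
  induction k with
  | zero => exact ⟨c, fun _ => rfl, rfl⟩
  | succ k ih =>
    obtain ⟨h, hh, htop⟩ := ih
    obtain ⟨h', hh', htop'⟩ := psmatD_actPS h (t + k)
    exact ⟨h', fun f => by rw [Function.iterate_succ_apply', hh, hh', add_assoc],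
      by rw [← add_assoc, htop', htop]⟩

def IsDiffOp (L : MatPS N → MatPS N) : Prop :=
  ∃ (u : ℕ) (g : ℕ → MatPS N), ∀ f, L f = actPS g u f

theorem isDiffOp_actPS (g : ℕ → MatPS N) (u : ℕ) : IsDiffOp (actPS g u) := ⟨u, g, fun _ => rfl⟩

theorem IsDiffOp.map_zero {L : MatPS N → MatPS N} (hL : IsDiffOp L) : L 0 = 0 := by
  obtain ⟨u, g, hg⟩ := hL
  rw [hg, actPS_zero]

theorem isDiffOp_zero : IsDiffOp (0 : MatPS N → MatPS N) :=
  ⟨0, 0, fun f => by simp [actPS]⟩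

theorem IsDiffOp.add {L₁ L₂ : MatPS N → MatPS N} (h₁ : IsDiffOp L₁) (h₂ : IsDiffOp L₂) :
    IsDiffOp (L₁ + L₂) := by
  obtain ⟨u₁, g₁, hg₁⟩ := h₁
  obtain ⟨u₂, g₂, hg₂⟩ := h₂
  refine ⟨max u₁ u₂, (fun n => if n ≤ u₁ then g₁ n else 0) + fun n => if n ≤ u₂ then g₂ n else 0,
    fun f => ?_⟩
  rw [Pi.add_apply, hg₁, hg₂, actPS_eq_of_le g₁ (le_max_left u₁ u₂),
    actPS_eq_of_le g₂ (le_max_right u₁ u₂), ← actPS_add_coeff]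

theorem IsDiffOp.sum {ι : Type*} (s : Finset ι) {L : ι → MatPS N → MatPS N}
    (hL : ∀ i ∈ s, IsDiffOp (L i)) : IsDiffOp (∑ i ∈ s, L i) := by
  classical
  induction s using Finset.induction with
  | empty => simpa using isDiffOp_zero
  | insert i s hi ih =>
    rw [sum_insert hi]
    exact (hL i (mem_insert_self i s)).add (ih fun j hj => hL j (mem_insert_of_mem hj))

theorem IsDiffOp.mul_right {L : MatPS N → MatPS N} (hL : IsDiffOp L) (M : MatPS N) :
    IsDiffOp (fun f => L f * M) := by
  obtain ⟨u, g, hg⟩ := hL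
  exact ⟨u, _, fun f => (congrArg (· * M) (hg f)).trans (actPS_mul_right g u f M)⟩

theorem isDiffOp_iterate_psmatD_mul (k : ℕ) (M : MatPS N) :
    IsDiffOp (fun f => psmatD^[k] f * M) :=
  ⟨k, Pi.single k M, fun f => (actPS_single M le_rfl f).symm⟩

theorem IsDiffOp.comp {L₁ L₂ : MatPS N → MatPS N} (h₁ : IsDiffOp L₁) (h₂ : IsDiffOp L₂) :
    IsDiffOp (L₂ ∘ L₁) := by
  obtain ⟨t, c, hc⟩ := h₁
  obtain ⟨s, b, hb⟩ := h₂
  have hterm : ∀ j, IsDiffOp fun f => psmatD^[j] (L₁ f) * b j := fun j => by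
    obtain ⟨h, hh, -⟩ := iterate_psmatD_actPS c t j
    simpa only [hc, hh] using (isDiffOp_actPS h (t + j)).mul_right (b j)
  obtain ⟨u, g, hg⟩ := IsDiffOp.sum (range (s + 1)) fun j _ => hterm j
  exact ⟨u, g, fun f => by simpa [hb, actPS] using hg f⟩

end DifferentialOperators

section Coefficients

variable {N : ℕ}

noncomputable def matCoeff (n : ℕ) : MatPS N →+ Mat N :=
  (coeff n : ℂ⟦X⟧ →ₗ[ℂ] ℂ).toAddMonoidHom.mapMatrix

theorem matCoeff_apply (n : ℕ) (f : MatPS N) (i j : Fin N) :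
    matCoeff n f i j = coeff n (f i j) := rfl

theorem ext_matCoeff {f g : MatPS N} (h : ∀ n, matCoeff n f = matCoeff n g) : f = g := by
  ext i j n
  exact congrFun (congrFun (h n) i) j

theorem matCoeff_mul (n : ℕ) (f g : MatPS N) :
    matCoeff n (f * g) = ∑ p ∈ range (n + 1), matCoeff p f * matCoeff (n - p) g := by
  ext i j
  simp only [matCoeff_apply, Matrix.mul_apply, map_sum, coeff_mul, Matrix.sum_apply]
  rw [sum_comm]
  exact Nat.sum_antidiagonal_eq_sum_range_succ
    (fun p q => ∑ k, coeff p (f i k) * coeff q (g k j)) n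

theorem iterate_psmatD_apply (k : ℕ) (f : MatPS N) (i j : Fin N) :
    psmatD^[k] f i j = (derivative ℂ)^[k] (f i j) := by
  induction k generalizing f with
  | zero => rfl
  | succ k ih => rw [Function.iterate_succ_apply, ih, Function.iterate_succ_apply, psmatD_apply]

theorem matCoeff_iterate_psmatD (n k : ℕ) (f : MatPS N) :
    matCoeff n (psmatD^[k] f) = (n + 1).ascFactorial k • matCoeff (n + k) f := by
  ext i j
  simp [matCoeff_apply, iterate_psmatD_apply, coeff_iterate_derivative]

theorem matCoeff_one (n : ℕ) : matCoeff n (1 : MatPS N) = if n = 0 then 1 else 0 := by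
  ext i j
  by_cases hn : n = 0 <;> by_cases hij : i = j <;>
    simp [matCoeff_apply, Matrix.one_apply, coeff_one, hn, hij]

theorem matCoeff_actPS (g : ℕ → MatPS N) (u n : ℕ) (ψ : MatPS N) :
    matCoeff n (actPS g u ψ) = ∑ i ∈ range (u + 1), ∑ p ∈ range (n + 1),
      (p + 1).ascFactorial i • matCoeff (p + i) ψ * matCoeff (n - p) (g i) := by
  simp only [actPS, map_sum, matCoeff_mul, matCoeff_iterate_psmatD]

noncomputable def mkMatPS (Ψ : ℕ → Mat N) : MatPS N :=
  Matrix.of fun i j => PowerSeries.mk fun k => Ψ k i j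

theorem matCoeff_mkMatPS (Ψ : ℕ → Mat N) (n : ℕ) : matCoeff n (mkMatPS Ψ) = Ψ n := by
  ext i j
  simp [matCoeff_apply, mkMatPS]

end Coefficients

section MonicOperators

variable {N : ℕ}

/-- Comparing `n`-th coefficients in `ψ·e = h` for `e` monic of order `m` determines the
coefficient of index `n + m` of `ψ` from those of lower index, with leading factor
`(n + 1)(n + 2) ⋯ (n + m) ≠ 0`; the coefficients below `m` are free and given by `init`. -/
noncomputable def solCoeff (m : ℕ) (e : ℕ → MatPS N) (h : MatPS N) (init : ℕ → Mat N)
    (k : ℕ) : Mat N :=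
  if k < m then init k
  else ((k - m + 1).ascFactorial m : ℂ)⁻¹ •
    (matCoeff (k - m) h - ∑ i : Fin m, ∑ p : Fin (k - m + 1),
      (p + 1 : ℕ).ascFactorial i • solCoeff m e h init (p + i) * matCoeff (k - m - p) (e i))
termination_by k
decreasing_by omega

variable {m : ℕ} {e : ℕ → MatPS N}

theorem solCoeff_add (h : MatPS N) (init : ℕ → Mat N) (n : ℕ) :
    solCoeff m e h init (n + m) = ((n + 1).ascFactorial m : ℂ)⁻¹ •
      (matCoeff n h - ∑ i ∈ range m, ∑ p ∈ range (n + 1),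
        (p + 1).ascFactorial i • solCoeff m e h init (p + i) * matCoeff (n - p) (e i)) := by
  rw [solCoeff, if_neg (by omega), Nat.add_sub_cancel, Fin.sum_univ_eq_sum_range
    (fun i => ∑ p : Fin (n + 1), (p + 1 : ℕ).ascFactorial i •
      solCoeff m e h init (p + i) * matCoeff (n - p) (e i))]
  congr 2
  exact sum_congr rfl fun i _ => Fin.sum_univ_eq_sum_range
    (fun p => (p + 1).ascFactorial i • solCoeff m e h init (p + i) * matCoeff (n - p) (e i)) _

theorem exists_actPS_eq (he : e m = 1) (h : MatPS N) (init : ℕ → Mat N) :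
    ∃ ψ, actPS e m ψ = h ∧ ∀ k < m, matCoeff k ψ = init k := by
  refine ⟨mkMatPS (solCoeff m e h init), ext_matCoeff fun n => ?_, fun k hk => by
    rw [matCoeff_mkMatPS, solCoeff, if_pos hk]⟩
  have hlead : ∑ p ∈ range (n + 1),
      (p + 1).ascFactorial m • solCoeff m e h init (p + m) * matCoeff (n - p) (e m)
        = (n + 1).ascFactorial m • solCoeff m e h init (n + m) := by
    rw [he, sum_eq_single_of_mem n (self_mem_range_succ n) fun p hp hpn => by
      rw [matCoeff_one, if_neg (by simp at hp; omega), mul_zero], Nat.sub_self, matCoeff_one,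
      if_pos rfl, mul_one]
  rw [matCoeff_actPS, sum_range_succ]
  simp only [matCoeff_mkMatPS]
  rw [hlead, solCoeff_add, ← Nat.cast_smul_eq_nsmul ℂ, smul_inv_smul₀
    (Nat.cast_ne_zero.mpr (Nat.ascFactorial_pos n m).ne'), add_sub_cancel]

theorem actPS_surjective (he : e m = 1) : Function.Surjective (actPS e m) := fun h =>
  (exists_actPS_eq he h 0).imp fun _ => And.left

theorem actPS_eq_zero_of_ker_subset (he : e m = 1) {u : ℕ} (hu : u < m) {g : ℕ → MatPS N}
    (hker : ∀ ψ, actPS e m ψ = 0 → actPS g u ψ = 0) (f : MatPS N) : actPS g u f = 0 := by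
  suffices hcoeff : ∀ w, ∀ i ≤ u, matCoeff w (g i) = 0 by
    refine sum_eq_zero fun i hi => ?_
    rw [ext_matCoeff fun w => (hcoeff w i (Nat.lt_succ_iff.mp (mem_range.mp hi))).trans
      (map_zero _).symm, mul_zero]
  intro w
  induction w using Nat.strong_induction_on with
  | _ w ih =>
  intro i₀ hi₀
  -- test against the solution whose initial coefficients pick out the coefficient of index `i₀`
  obtain ⟨ψ, hψ, hinit⟩ := exists_actPS_eq he 0 (Pi.single i₀ 1)
  have hw := congrArg (matCoeff w) (hker ψ hψ)
  have hlow : ∀ i ∈ range (u + 1), ∑ p ∈ range (w + 1),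
      (p + 1).ascFactorial i • matCoeff (p + i) ψ * matCoeff (w - p) (g i)
        = (1 : ℕ).ascFactorial i • (Pi.single i₀ 1 : ℕ → Mat N) i * matCoeff w (g i) := by
    intro i hi
    have hiu : i ≤ u := Nat.lt_succ_iff.mp (mem_range.mp hi)
    rw [sum_eq_single_of_mem 0 (by simp) fun p hp hp0 => by
      rw [ih (w - p) (by simp at hp; omega) i hiu, mul_zero], zero_add, zero_add, Nat.sub_zero,
      hinit i (by omega)]
  rw [matCoeff_actPS, sum_congr rfl hlow, sum_eq_single_of_mem i₀
    (mem_range.mpr (Nat.lt_succ_of_le hi₀)) fun i _ hi => by rw [Pi.single_eq_of_ne hi,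
      smul_zero, zero_mul], Pi.single_eq_same, smul_mul_assoc, one_mul, map_zero,
      ← Nat.cast_smul_eq_nsmul ℂ] at hw
  exact (smul_eq_zero.mp hw).resolve_left (Nat.cast_ne_zero.mpr (Nat.ascFactorial_pos 0 i₀).ne')

theorem exists_eq_comp_add_of_monic (he : e m = 1) (hm : 0 < m) (u : ℕ) (g : ℕ → MatPS N) :
    ∃ Q, IsDiffOp Q ∧ ∃ v < m, ∃ R : ℕ → MatPS N,
      ∀ f, actPS g u f = Q (actPS e m f) + actPS R v f := by
  induction u using Nat.strong_induction_on generalizing g with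
  | _ u ih =>
  rcases lt_or_ge u m with hu | hu
  · exact ⟨0, isDiffOp_zero, u, hu, g, fun f => (zero_add _).symm⟩
  obtain ⟨v, rfl⟩ : ∃ v, u = v + 1 := ⟨u - 1, by omega⟩
  obtain ⟨h, hh, htop⟩ := iterate_psmatD_actPS e m (v + 1 - m)
  rw [Nat.add_sub_cancel' hu] at hh htop
  rw [he] at htop
  -- subtracting `∂^(v + 1 - m) e · g (v + 1)` cancels the leading coefficient of `g`
  set g' : ℕ → MatPS N := fun n => g n - h n * g (v + 1)
  have hg' : ∀ f, actPS g (v + 1) f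
      = actPS g' v f + psmatD^[v + 1 - m] (actPS e m f) * g (v + 1) := by
    intro f
    have hdrop : actPS g' (v + 1) f = actPS g' v f := by
      rw [actPS_succ, show g' (v + 1) = 0 by simp [g', htop], mul_zero, add_zero]
    rw [hh, actPS_mul_right, ← hdrop, ← actPS_add_coeff]
    exact congrArg (actPS · (v + 1) f) (funext fun n => (sub_add_cancel _ _).symm)
  obtain ⟨Q, hQ, w, hw, R, hR⟩ := ih v (Nat.lt_succ_self v) g'
  refine ⟨Q + fun y => psmatD^[v + 1 - m] y * g (v + 1),
    hQ.add (isDiffOp_iterate_psmatD_mul _ _), w, hw, R, fun f => ?_⟩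
  rw [hg', hR, Pi.add_apply, add_right_comm]

theorem exists_eq_comp_of_ker_subset (he : e m = 1) {G : MatPS N → MatPS N} (hG : IsDiffOp G)
    (hker : ∀ ψ, actPS e m ψ = 0 → G ψ = 0) :
    ∃ Q, IsDiffOp Q ∧ ∀ f, G f = Q (actPS e m f) := by
  rcases Nat.eq_zero_or_pos m with rfl | hm
  · exact ⟨G, hG, fun f => by simp [actPS, he]⟩
  obtain ⟨u, g, hg⟩ := hG
  obtain ⟨Q, hQ, v, hv, R, hR⟩ := exists_eq_comp_add_of_monic he hm u g
  have hRker : ∀ ψ, actPS e m ψ = 0 → actPS R v ψ = 0 := fun ψ hψ => by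
    simpa [← hg, hker ψ hψ, hψ, hQ.map_zero] using (hR ψ).symm
  exact ⟨Q, hQ, fun f => by rw [hg, hR, actPS_eq_zero_of_ker_subset he hv hRker, add_zero]⟩

end MonicOperators

/-- **Left-division criterion via kernels.**  Let `μ = (a,r)` and `δ = (b,s)` be matrix
differential operators over `M_N(ℂ[[x]])` and suppose `νμ` is monic for some operator
`ν = (c,t)`.  Then `δ = μη` for some matrix differential operator `η` if and only if
`ker(μ) ⊆ ker(δ)`. -/
theorem left_division_iff_kernel_subset {N : ℕ} (r s t : ℕ)
    (a b c : ℕ → MatPS N)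
    -- νμ is monic, i.e. p·(νμ) = (p·ν)·μ is given by a monic operator:
    (hmonic : ∃ (m : ℕ) (e : ℕ → MatPS N), e m = 1 ∧
      ∀ f : MatPS N, actPS e m f = actPS a r (actPS c t f)) :
    (∃ (s' : ℕ) (d : ℕ → MatPS N),
        ∀ f : MatPS N, actPS b s f = actPS d s' (actPS a r f)) ↔
      ∀ ψ : MatPS N, actPS a r ψ = 0 → actPS b s ψ = 0 := by
  obtain ⟨m, e, he, hea⟩ := hmonic
  refine ⟨fun ⟨s', d, hd⟩ ψ hψ => by rw [hd, hψ, actPS_zero], fun hK => ?_⟩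
  obtain ⟨Q, ⟨s', d, hd⟩, hQ⟩ := exists_eq_comp_of_ker_subset he
    ((isDiffOp_actPS c t).comp (isDiffOp_actPS b s)) fun ψ hψ => hK _ (by rw [← hea, hψ])
  refine ⟨s', d, fun f => ?_⟩
  obtain ⟨g, hg⟩ := actPS_surjective he (actPS a r f)
  have hf : actPS b s f = actPS b s (actPS c t g) := by
    rw [← sub_eq_zero, ← actPS_sub]
    exact hK _ (by rw [actPS_sub, ← hea, hg, sub_self])
  rw [hf, ← Function.comp_apply (f := actPS b s), hQ, hg, hd]
end
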